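/- arXiv:1204.4503 — 6 statements merged into one kernel-verified Lean document; each statement's English description precedes it below -/
import Mathlib

section
/- Let q ≥ 3 be an integer and let 0 ≤ β < q/2. Then there exists ε > 0 such that D_β(x) < 0 for all x ∈ (1/q, 1/q + ε); equivalently, s^♯(β) := inf{s ∈ (1/q, 1] : D_β(s) ≥ 0} (with the convention that the infimum of the empty set is 1) satisfies s^♯(β) > 1/q. -/
/-- The drift function `D_β(x) = −x + (1 + (q−1) e^{2β(1−qx)/(q−1)})⁻¹`,
equivalently `−x + e^{2βx}/(e^{2βx} + (q−1)e^{2β(1−x)/(q−1)})`. -/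
noncomputable def Dfun (q : ℕ) (β x : ℝ) : ℝ :=
  -x + (1 + ((q : ℝ) - 1) * Real.exp (2 * β * (1 - (q : ℝ) * x) / ((q : ℝ) - 1)))⁻¹

/-- The dynamical (spinodal) critical inverse temperature
`β_s(q) = sup {β ≥ 0 : D_β(x) ≠ 0 for all x ∈ (1/q,1)}`. -/
noncomputable def betaS (q : ℕ) : ℝ :=
  sSup {β : ℝ | 0 ≤ β ∧ ∀ x ∈ Set.Ioo (1 / (q : ℝ)) 1, Dfun q β x ≠ 0}

open scoped Classical in
/-- `s^♯(β) = inf {s ∈ (1/q,1] : D_β(s) ≥ 0}`, with the convention that the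
infimum of the empty set is `1`. -/
noncomputable def sSharp (q : ℕ) (β : ℝ) : ℝ :=
  if {s : ℝ | s ∈ Set.Ioc (1 / (q : ℝ)) 1 ∧ 0 ≤ Dfun q β s}.Nonempty then
    sInf {s : ℝ | s ∈ Set.Ioc (1 / (q : ℝ)) 1 ∧ 0 ≤ Dfun q β s}
  else 1

/-!
`D_β` vanishes at the uniform point `1/q`, and its derivative there is `-1 + 2β/q`, which is
negative exactly when `β < q/2`. Hence `D_β` is negative on a right neighbourhood of `1/q`, and
every `s > 1/q` with `D_β(s) ≥ 0` lies beyond that neighbourhood.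
-/

open Filter Topology Set

theorem HasDerivWithinAt.eventually_neg_nhdsGT {f : ℝ → ℝ} {f' a : ℝ}
    (hf : HasDerivWithinAt f f' (Ioi a) a) (hf' : f' < 0) (ha : f a = 0) :
    ∀ᶠ x in 𝓝[>] a, f x < 0 := by
  have hslope : ∀ᶠ x in 𝓝[>] a, slope f a x < 0 := by
    have := (hasDerivWithinAt_iff_tendsto_slope.mp hf).eventually_lt_const hf'
    rwa [sdiff_singleton_eq_self self_notMem_Ioi] at this
  filter_upwards [hslope, self_mem_nhdsWithin] with x hs hx
  rw [slope_def_field, ha, sub_zero] at hs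
  simpa using (div_lt_iff₀ (sub_pos.2 hx)).mp hs

theorem Dfun_one_div (q : ℕ) (hq : q ≠ 0) (β : ℝ) : Dfun q β (1 / q) = 0 := by
  rw [Dfun, mul_one_div_cancel (Nat.cast_ne_zero.2 hq)]
  simp

theorem hasDerivAt_Dfun (q : ℕ) (hq : 1 < q) (β x : ℝ) :
    HasDerivAt (Dfun q β)
      (-1 + 2 * β * q * Real.exp (2 * β * (1 - q * x) / (q - 1)) /
        (1 + (q - 1) * Real.exp (2 * β * (1 - q * x) / (q - 1))) ^ 2) x := by
  have hq' : (1 : ℝ) < q := by exact_mod_cast hq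
  have hq1 : (q : ℝ) - 1 ≠ 0 := by linarith
  have hexp := ((((hasDerivAt_id' x).const_mul (q : ℝ)).const_sub 1).const_mul (2 * β)
    |>.div_const ((q : ℝ) - 1)).exp
  have hden : 1 + ((q : ℝ) - 1) * Real.exp (2 * β * (1 - q * x) / (q - 1)) ≠ 0 := by
    have := Real.exp_pos (2 * β * (1 - q * x) / (q - 1))
    nlinarith
  refine ((hasDerivAt_id' x).fun_neg.fun_add
    ((hexp.const_mul ((q : ℝ) - 1)).const_add 1 |>.fun_inv hden)).congr_deriv ?_
  field_simp

theorem hasDerivAt_Dfun_one_div (q : ℕ) (hq : 1 < q) (β : ℝ) :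
    HasDerivAt (Dfun q β) (-1 + 2 * β / q) (1 / q) := by
  have hq0 : (q : ℝ) ≠ 0 := by positivity
  convert hasDerivAt_Dfun q hq β (1 / q) using 1
  simp only [mul_one_div_cancel hq0, sub_self, mul_zero, zero_div, Real.exp_zero, mul_one,
    add_sub_cancel]
  field_simp

theorem one_div_lt_sSharp (q : ℕ) (hq : 1 < q) (β : ℝ) {u : ℝ} (hu : 1 / (q : ℝ) < u)
    (hneg : ∀ x ∈ Ioo (1 / (q : ℝ)) u, Dfun q β x < 0) : 1 / (q : ℝ) < sSharp q β := by
  rw [sSharp]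
  split_ifs with hne
  · refine hu.trans_le (le_csInf hne ?_)
    rintro s ⟨⟨hs, -⟩, hDs⟩
    by_contra! hsu
    exact (hneg s ⟨hs, hsu⟩).not_ge hDs
  · exact (div_lt_one (by positivity)).2 (by exact_mod_cast hq)

theorem sSharp_gt_general (q : ℕ) (hq : 3 ≤ q) (β : ℝ) (hβ : β < (q : ℝ) / 2) :
    (∃ ε : ℝ, 0 < ε ∧ ∀ x ∈ Set.Ioo (1 / (q : ℝ)) (1 / (q : ℝ) + ε), Dfun q β x < 0) ∧
    1 / (q : ℝ) < sSharp q β := by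
  have hq1 : 1 < q := by omega
  have hslope : -1 + 2 * β / q < 0 := by
    have : 2 * β / q < 1 := (div_lt_one (by positivity)).2 (by linarith)
    linarith
  have hneg : ∀ᶠ x in 𝓝[>] (1 / (q : ℝ)), Dfun q β x < 0 :=
    (hasDerivAt_Dfun_one_div q hq1 β).hasDerivWithinAt.eventually_neg_nhdsGT hslope
      (Dfun_one_div q (by omega) β)
  obtain ⟨u, hu, hsub⟩ := mem_nhdsGT_iff_exists_Ioo_subset.mp hneg
  exact ⟨⟨u - 1 / q, sub_pos.2 hu, fun x hx ↦ hsub ⟨hx.1, by linarith [hx.2]⟩⟩,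
    one_div_lt_sSharp q hq1 β hu hsub⟩

/-- (Proposition 3.1, part 2): for `q ≥ 3` and `0 ≤ β < q/2`, `D_β` is negative
just to the right of `1/q`; equivalently `s^♯(β) > 1/q`. -/
theorem sSharp_gt (q : ℕ) (hq : 3 ≤ q) (β : ℝ) (hβ0 : 0 ≤ β) (hβ : β < (q : ℝ) / 2) :
    (∃ ε : ℝ, 0 < ε ∧ ∀ x ∈ Set.Ioo (1 / (q : ℝ)) (1 / (q : ℝ) + ε), Dfun q β x < 0) ∧
    1 / (q : ℝ) < sSharp q β :=
  sSharp_gt_general q hq β hβ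
end

section
/- Let q ≥ 3 be an integer and let β ≥ 0. Then D_β(x) < 0 for all x ∈ (1/q, 1] if and only if β < β_s(q). -/
open Real Set Filter Topology

theorem exists_isMinOn_Ioo_of_eventually_lt {α β : Type*} [LinearOrder α] [TopologicalSpace α]
    [OrderTopology α] [CompactIccSpace α] [LinearOrder β] [TopologicalSpace β]
    [OrderClosedTopology β] {f : α → β} {a b c : α} (hf : ContinuousOn f (Ioo a b))
    (hc : c ∈ Ioo a b) (ha : ∀ᶠ x in 𝓝[>] a, f c < f x) (hb : ∀ᶠ x in 𝓝[<] b, f c < f x) :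
    ∃ x₀ ∈ Ioo a b, IsMinOn f (Ioo a b) x₀ := by
  obtain ⟨u, hau, hu⟩ := (mem_nhdsGT_iff_exists_Ioo_subset' hc.1).1 ha
  obtain ⟨v, hvb, hv⟩ := (mem_nhdsLT_iff_exists_Ioo_subset' hc.2).1 hb
  have huc : u ≤ c := not_lt.1 fun h ↦ lt_irrefl _ (hu ⟨hc.1, h⟩)
  have hcv : c ≤ v := not_lt.1 fun h ↦ lt_irrefl _ (hv ⟨h, hc.2⟩)
  have hsub : Icc u v ⊆ Ioo a b := Icc_subset_Ioo hau hvb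
  obtain ⟨x₀, hx₀, hmin⟩ := isCompact_Icc.exists_isMinOn ⟨c, huc, hcv⟩ (hf.mono hsub)
  have hx₀c : f x₀ ≤ f c := hmin ⟨huc, hcv⟩
  refine ⟨x₀, hsub hx₀, fun x hx ↦ ?_⟩
  rcases lt_or_ge x u with hxu | hux
  · exact hx₀c.trans (hu ⟨hx.1, hxu⟩).le
  rcases le_or_gt x v with hxv | hvx
  · exact hmin ⟨hux, hxv⟩
  · exact hx₀c.trans (hv ⟨hvx, hx.2⟩).le

noncomputable def phi (q : ℕ) (x : ℝ) : ℝ :=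
  ((q : ℝ) - 1) * log (((q : ℝ) - 1) * x / (1 - x)) / (2 * ((q : ℝ) * x - 1))

section

variable {q : ℕ} {x : ℝ}

theorem natCast_sub_one_pos (hq : 1 < q) : (0 : ℝ) < q - 1 :=
  sub_pos.2 (Nat.one_lt_cast.2 hq)

theorem one_lt_natCast_mul_of_one_div_lt (hq : 1 < q) (hx : 1 / (q : ℝ) < x) : 1 < (q : ℝ) * x :=
  (div_lt_iff₀' (zero_lt_one.trans (Nat.one_lt_cast.2 hq))).1 hx

theorem pos_of_one_div_natCast_lt (hx : 1 / (q : ℝ) < x) : 0 < x :=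
  (by positivity : (0 : ℝ) ≤ 1 / q).trans_lt hx

theorem one_div_natCast_lt_one (hq : 1 < q) : 1 / (q : ℝ) < 1 := by
  rw [one_div]
  exact inv_lt_one_of_one_lt₀ (Nat.one_lt_cast.2 hq)

theorem strictMono_Dfun (hq : 1 < q) (hx : 1 / (q : ℝ) < x) : StrictMono (Dfun q · x) := by
  have hq1 := natCast_sub_one_pos hq
  have hqx := one_lt_natCast_mul_of_one_div_lt hq hx
  intro β₁ β₂ hβ
  have harg : 2 * β₂ * (1 - q * x) / (q - 1) < 2 * β₁ * (1 - q * x) / (q - 1) := by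
    apply div_lt_div_of_pos_right _ hq1
    nlinarith
  simp only [Dfun]
  gcongr

theorem Dfun_one_neg (hq : 1 < q) (β : ℝ) : Dfun q β 1 < 0 := by
  rw [Dfun, neg_add_lt_iff_lt_add, add_zero]
  exact inv_lt_one_of_one_lt₀
    (lt_add_of_pos_right 1 (mul_pos (natCast_sub_one_pos hq) (exp_pos _)))

variable (hq : 1 < q) (hx : x ∈ Ioo (1 / (q : ℝ)) 1)
include hq hx

theorem Dfun_phi_eq_zero : Dfun q (phi q x) x = 0 := by
  have hq1 := natCast_sub_one_pos hq
  have hqx := sub_pos.2 (one_lt_natCast_mul_of_one_div_lt hq hx.1)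
  have hx0 : 0 < x := pos_of_one_div_natCast_lt hx.1
  have h1x : 0 < 1 - x := sub_pos.2 hx.2
  have hexp : 2 * phi q x * (1 - q * x) / (q - 1) = -log ((q - 1) * x / (1 - x)) := by
    rw [phi]
    field_simp
    ring
  rw [Dfun, hexp, exp_neg, exp_log (by positivity)]
  field_simp
  ring

theorem Dfun_neg_iff_lt_phi {β : ℝ} : Dfun q β x < 0 ↔ β < phi q x := by
  rw [← (strictMono_Dfun hq hx.1).lt_iff_lt (a := β) (b := phi q x), Dfun_phi_eq_zero hq hx]

theorem inv_two_mul_le_phi : (2 * x)⁻¹ ≤ phi q x := by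
  have hq1 := natCast_sub_one_pos hq
  have hqx := sub_pos.2 (one_lt_natCast_mul_of_one_div_lt hq hx.1)
  have hx0 : 0 < x := pos_of_one_div_natCast_lt hx.1
  have h1x : 0 < 1 - x := sub_pos.2 hx.2
  calc (2 * x)⁻¹ = (q - 1) * (1 - ((q - 1) * x / (1 - x))⁻¹) / (2 * (q * x - 1)) := by
        rw [eq_div_iff (by positivity), inv_div, one_sub_div (by positivity)]
        field_simp
        ring
    _ ≤ phi q x := by
        rw [phi]
        gcongr
        exact one_sub_inv_le_log_of_pos (by positivity)

theorem log_div_two_le_phi : log ((q - 1) * x / (1 - x)) / 2 ≤ phi q x := by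
  have hqx := sub_pos.2 (one_lt_natCast_mul_of_one_div_lt hq hx.1)
  have h1x : 0 < 1 - x := sub_pos.2 hx.2
  have hlog : 0 ≤ log ((q - 1) * x / (1 - x)) :=
    log_nonneg ((one_le_div h1x).2 (by linarith))
  have hfac : 1 / 2 ≤ ((q : ℝ) - 1) / (2 * (q * x - 1)) := by
    rw [div_le_div_iff₀ two_pos (by linarith)]
    nlinarith [hx.2]
  calc log ((q - 1) * x / (1 - x)) / 2 = log ((q - 1) * x / (1 - x)) * (1 / 2) := by ring
    _ ≤ log ((q - 1) * x / (1 - x)) * ((q - 1) / (2 * (q * x - 1))) :=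
        mul_le_mul_of_nonneg_left hfac hlog
    _ = phi q x := by rw [phi]; ring

end

theorem phi_two_div_succ {q : ℕ} (hq : 1 < q) : phi q (2 / (q + 1)) = (q + 1) * log 2 / 2 := by
  have hq1 := natCast_sub_one_pos hq
  have hq2 : (0 : ℝ) < q + 1 := by linarith
  have hr : ((q : ℝ) - 1) * (2 / (q + 1)) / (1 - 2 / (q + 1)) = 2 := by
    rw [one_sub_div hq2.ne', show (q : ℝ) + 1 - 2 = q - 1 by ring]
    field_simp
  have hden : (q : ℝ) * (2 / (q + 1)) - 1 = (q - 1) / (q + 1) := by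
    field_simp
    ring
  rw [phi, hr, hden]
  field_simp

section

variable {q : ℕ} (hq : 1 < q)
include hq

theorem continuousOn_phi : ContinuousOn (phi q) (Ioo (1 / (q : ℝ)) 1) := by
  have hq1 := natCast_sub_one_pos hq
  intro x hx
  have hqx := sub_pos.2 (one_lt_natCast_mul_of_one_div_lt hq hx.1)
  have hx0 : 0 < x := pos_of_one_div_natCast_lt hx.1
  have h1x : 0 < 1 - x := sub_pos.2 hx.2
  apply ContinuousAt.continuousWithinAt
  unfold phi
  fun_prop (disch := positivity)

theorem tendsto_phi_nhdsLT_one : Tendsto (phi q) (𝓝[<] 1) atTop := by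
  have hq1 := natCast_sub_one_pos hq
  have h1x : Tendsto (fun x : ℝ ↦ 1 - x) (𝓝[<] 1) (𝓝[>] 0) := by
    refine tendsto_nhdsWithin_iff.2 ⟨?_, eventually_nhdsWithin_of_forall fun x hx ↦ ?_⟩
    · exact tendsto_nhdsWithin_of_tendsto_nhds
        (by simpa using (continuous_sub_left (1 : ℝ)).tendsto 1)
    · exact mem_Ioi.2 (sub_pos.2 hx)
  have hr : Tendsto (fun x : ℝ ↦ (q - 1) * x / (1 - x)) (𝓝[<] 1) atTop := by
    have := Tendsto.pos_mul_atTop (by simpa using hq1) (tendsto_nhdsWithin_of_tendsto_nhds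
      ((continuous_const_mul ((q : ℝ) - 1)).tendsto 1)) (tendsto_inv_nhdsGT_zero.comp h1x)
    simpa only [div_eq_mul_inv, Function.comp_def] using this
  refine tendsto_atTop_mono' _ ?_ ((tendsto_log_atTop.comp hr).atTop_div_const two_pos)
  filter_upwards [Ioo_mem_nhdsLT (one_div_natCast_lt_one hq)] with x hx
  exact log_div_two_le_phi hq hx

theorem eventually_lt_phi_nhdsGT {c : ℝ} (hc : c < q / 2) :
    ∀ᶠ x in 𝓝[>] (1 / (q : ℝ)), c < phi q x := by
  have hq0 : (0 : ℝ) < q := zero_lt_one.trans (Nat.one_lt_cast.2 hq)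
  have hlim : Tendsto (fun x : ℝ ↦ (2 * x)⁻¹) (𝓝 (1 / q)) (𝓝 (q / 2)) := by
    convert ((continuous_const_mul (2 : ℝ)).tendsto (1 / (q : ℝ))).inv₀ (by positivity) using 2
    field_simp
  filter_upwards [nhdsWithin_le_nhds (hlim.eventually_const_lt hc),
    Ioo_mem_nhdsGT (one_div_natCast_lt_one hq)] with x hcx hx
  exact hcx.trans_le (inv_two_mul_le_phi hq hx)

theorem betaS_eq_of_isMinOn {x₀ : ℝ} (hx₀ : x₀ ∈ Ioo (1 / (q : ℝ)) 1)
    (hmin : IsMinOn (phi q) (Ioo (1 / (q : ℝ)) 1) x₀) : betaS q = phi q x₀ := by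
  have hpos : 0 < phi q x₀ :=
    (inv_pos.2 (mul_pos two_pos (pos_of_one_div_natCast_lt hx₀.1))).trans_le
      (inv_two_mul_le_phi hq hx₀)
  suffices {β : ℝ | 0 ≤ β ∧ ∀ x ∈ Ioo (1 / (q : ℝ)) 1, Dfun q β x ≠ 0} = Ico 0 (phi q x₀) by
    rw [betaS, this, csSup_Ico hpos]
  ext β
  refine ⟨fun ⟨hβ, hne⟩ ↦ ⟨hβ, not_le.1 fun hle ↦ ?_⟩, fun ⟨hβ, hlt⟩ ↦ ⟨hβ, fun x hx ↦
    ((Dfun_neg_iff_lt_phi hq hx).2 (hlt.trans_le (hmin hx))).ne⟩⟩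
  obtain ⟨x₁, hβx₁, hx₁⟩ := (((tendsto_phi_nhdsLT_one hq).eventually_gt_atTop β).and
    (Ioo_mem_nhdsLT (one_div_natCast_lt_one hq))).exists
  obtain ⟨x, hx, rfl⟩ :=
    isPreconnected_Ioo.intermediate_value hx₀ hx₁ (continuousOn_phi hq) ⟨hle, hβx₁.le⟩
  exact hne x hx (Dfun_phi_eq_zero hq hx)

end

theorem exists_isMinOn_phi {q : ℕ} (hq : 3 ≤ q) :
    ∃ x₀ ∈ Ioo (1 / (q : ℝ)) 1, IsMinOn (phi q) (Ioo (1 / (q : ℝ)) 1) x₀ := by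
  have hq' : 1 < q := by omega
  have hq3 : (3 : ℝ) ≤ q := by exact_mod_cast hq
  have hc : 2 / ((q : ℝ) + 1) ∈ Ioo (1 / (q : ℝ)) 1 := by
    constructor
    · rw [div_lt_div_iff₀ (by positivity) (by positivity)]
      linarith
    · rw [div_lt_one (by positivity)]
      linarith
  have hlt : phi q (2 / (q + 1)) < q / 2 := by
    have := mul_lt_mul_of_pos_left log_two_lt_d9 (by positivity : (0 : ℝ) < q + 1)
    rw [phi_two_div_succ hq']
    linarith
  exact exists_isMinOn_Ioo_of_eventually_lt (continuousOn_phi hq') hc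
    (eventually_lt_phi_nhdsGT hq' hlt) ((tendsto_phi_nhdsLT_one hq').eventually_gt_atTop _)

theorem Dfun_neg_iff_lt_betaS_general (q : ℕ) (hq : 3 ≤ q) (β : ℝ) :
    (∀ x ∈ Set.Ioc (1 / (q : ℝ)) 1, Dfun q β x < 0) ↔ β < betaS q := by
  have hq' : 1 < q := by omega
  obtain ⟨x₀, hx₀, hmin⟩ := exists_isMinOn_phi hq
  rw [betaS_eq_of_isMinOn hq' hx₀ hmin]
  refine ⟨fun h ↦ (Dfun_neg_iff_lt_phi hq' hx₀).1 (h x₀ ⟨hx₀.1, hx₀.2.le⟩), fun h x hx ↦ ?_⟩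
  rcases hx.2.eq_or_lt with rfl | hx1
  · exact Dfun_one_neg hq' β
  · exact (Dfun_neg_iff_lt_phi hq' ⟨hx.1, hx1⟩).2 (h.trans_le (hmin ⟨hx.1, hx1⟩))

/-- (Proposition 3.1, part 4): for `q ≥ 3` and `β ≥ 0`, `D_β(x) < 0` for all
`x ∈ (1/q,1]` if and only if `β < β_s(q)`. -/
theorem Dfun_neg_iff_lt_betaS (q : ℕ) (hq : 3 ≤ q) (β : ℝ) (hβ0 : 0 ≤ β) :
    (∀ x ∈ Set.Ioc (1 / (q : ℝ)) 1, Dfun q β x < 0) ↔ β < betaS q :=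
  Dfun_neg_iff_lt_betaS_general q hq β
end

section
/- Let (X_t)_{t≥0} be a real-valued discrete-time process on a probability space, adapted to a filtration (F_t)_{t≥0}, with X_0 = x_0 almost surely, |X_{t+1} − X_t| ≤ R almost surely for all t (for some R > 0), and E[X_{t+1} − X_t | F_t] ≤ −δ on the event {X_t ≥ 0} for all t, where δ > 0. Let τ₀⁻ = inf{t ≥ 0 : X_t ≤ 0}. Then for every integer t₁ ≥ 1 with δ t₁ ≥ x₀, P(τ₀⁻ > t₁) ≤ exp(−(δ t₁ − x₀)²/(8 t₁ R²)). -/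
/-!
While `X` stays positive, `Y t = X t + δ t` has nonpositive conditional drift, and its increments
lie in `[-2R, 2R]` (the drift bound at time `0` forces `δ ≤ R`). As `exp` lies below its chord
on `[-λc, λc]` and `cosh x ≤ exp (x ^ 2 / 2)`, the conditional exponential moment of an increment
is at most `exp (λ ^ 2 c ^ 2 / 2)` there, so `E[1_{A t} exp (λ Y t)]`, with `A t` the
`F t`-measurable event `{X s > 0 for s ≤ t}`, grows at most by that factor per step. On `A t₁`
we have `Y t₁ ≥ δ t₁`; Markov's inequality with `λ = (δ t₁ - x₀) / (t₁ c ^ 2)`, `c = 2R`,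
gives the bound.
-/

open MeasureTheory ProbabilityTheory Real Filter

theorem exp_mul_le_cosh_add_sinh_div_mul {c z l : ℝ} (hc : 0 < c) (hz : |z| ≤ c) :
    exp (l * z) ≤ cosh (l * c) + sinh (l * c) / c * z := by
  obtain ⟨hz₁, hz₂⟩ := abs_le.mp hz
  have hw₁ : 0 ≤ (c - z) / (2 * c) := div_nonneg (by linarith) (by positivity)
  have hw₂ : 0 ≤ (c + z) / (2 * c) := div_nonneg (by linarith) (by positivity)
  have hw : (c - z) / (2 * c) + (c + z) / (2 * c) = 1 := by field_simp; ring
  have hchord := convexOn_exp.2 (Set.mem_univ (-(l * c))) (Set.mem_univ (l * c)) hw₁ hw₂ hw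
  calc exp (l * z)
      = exp (((c - z) / (2 * c)) • -(l * c) + ((c + z) / (2 * c)) • (l * c)) := by
        simp only [smul_eq_mul]; field_simp; ring_nf
    _ ≤ _ := hchord
    _ = cosh (l * c) + sinh (l * c) / c * z := by
        rw [cosh_eq, sinh_eq]; simp only [smul_eq_mul]; field_simp; ring

section ConditionalExpectation

variable {Ω : Type*} {m' m : MeasurableSpace Ω} {μ : Measure Ω} {Z : Ω → ℝ}

theorem ae_condExp_exp_mul_le_of_condExp_nonpos [IsFiniteMeasure μ] (hm : m' ≤ m) {c l : ℝ}
    (hZ : Integrable Z μ) (hc : 0 < c) (hZc : ∀ᵐ ω ∂μ, |Z ω| ≤ c) (hl : 0 ≤ l) :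
    ∀ᵐ ω ∂μ, μ[Z|m'] ω ≤ 0 → μ[fun ω => exp (l * Z ω)|m'] ω ≤ exp (l ^ 2 * c ^ 2 / 2) := by
  set s := sinh (l * c) / c
  have hs : 0 ≤ s := div_nonneg (sinh_nonneg_iff.mpr (by positivity)) hc.le
  have hexp : Integrable (fun ω => exp (l * Z ω)) μ :=
    integrable_exp_mul_of_mem_Icc hZ.1.aemeasurable (hZc.mono fun _ => abs_le.mp)
  have hchord : μ[fun ω => exp (l * Z ω)|m'] ≤ᵐ[μ] μ[fun ω => cosh (l * c) + s * Z ω|m'] :=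
    condExp_mono hexp ((integrable_const _).add (hZ.const_mul s))
      (hZc.mono fun ω hω => exp_mul_le_cosh_add_sinh_div_mul hc hω)
  have haffine : μ[fun ω => cosh (l * c) + s * Z ω|m'] =ᵐ[μ]
      fun ω => cosh (l * c) + s * μ[Z|m'] ω := by
    refine (condExp_add (integrable_const _) (hZ.const_mul s) m').trans ?_
    rw [condExp_const hm]
    filter_upwards [condExp_smul (μ := μ) s Z m'] with ω hω
    exact congrArg (cosh (l * c) + ·) hω
  filter_upwards [hchord, haffine] with ω hω₁ hω₂ hneg
  calc μ[fun ω => exp (l * Z ω)|m'] ω ≤ cosh (l * c) + s * μ[Z|m'] ω := hω₁.trans hω₂.le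
    _ ≤ cosh (l * c) := by nlinarith
    _ ≤ exp ((l * c) ^ 2 / 2) := cosh_le_exp_half_sq _
    _ = exp (l ^ 2 * c ^ 2 / 2) := by ring_nf

theorem le_of_ae_le_of_ae_condExp_le [IsProbabilityMeasure μ] (hm : m' ≤ m) {a b : ℝ}
    (hZ : Integrable Z μ) (ha : ∀ᵐ ω ∂μ, a ≤ Z ω) (hb : ∀ᵐ ω ∂μ, μ[Z|m'] ω ≤ b) : a ≤ b := by
  have hmono := condExp_mono (m := m') (integrable_const a) hZ ha
  rw [condExp_const hm] at hmono
  obtain ⟨ω, haω, hbω⟩ := (hmono.and hb).exists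
  exact haω.trans hbω

end ConditionalExpectation

section BoundedIncrements

variable {Ω : Type*} {m : MeasurableSpace Ω} {μ : Measure Ω} {F : Filtration ℕ m}
  {Y : ℕ → Ω → ℝ} {y₀ c : ℝ}

theorem ae_abs_sub_le_of_abs_sub_succ_le (h0 : ∀ᵐ ω ∂μ, Y 0 ω = y₀)
    (hinc : ∀ t, ∀ᵐ ω ∂μ, |Y (t + 1) ω - Y t ω| ≤ c) (t : ℕ) :
    ∀ᵐ ω ∂μ, |Y t ω - y₀| ≤ t * c := by
  induction t with
  | zero => filter_upwards [h0] with ω hω; simp [hω]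
  | succ t ih =>
    filter_upwards [ih, hinc t] with ω hω hinc
    calc |Y (t + 1) ω - y₀| = |(Y (t + 1) ω - Y t ω) + (Y t ω - y₀)| := by ring_nf
      _ ≤ |Y (t + 1) ω - Y t ω| + |Y t ω - y₀| := abs_add_le _ _
      _ ≤ (t + 1 : ℕ) * c := by push_cast; linarith

theorem MeasureTheory.Adapted.integrable_sub_succ [IsFiniteMeasure μ] (hY : Adapted F Y)
    {t : ℕ} (hinc : ∀ᵐ ω ∂μ, |Y (t + 1) ω - Y t ω| ≤ c) : Integrable (Y (t + 1) - Y t) μ :=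
  have hm (s : ℕ) : Measurable (Y s) := (hY s).mono (F.le s) le_rfl
  .of_bound ((hm _).sub (hm _)).aestronglyMeasurable c hinc

end BoundedIncrements

structure NonposDriftOn {Ω : Type*} {m : MeasurableSpace Ω} (F : Filtration ℕ m)
    (μ : Measure Ω) (Y : ℕ → Ω → ℝ) (A : ℕ → Set Ω) (c : ℝ) : Prop where
  adapted : Adapted F Y
  measurableSet : ∀ t, MeasurableSet[F t] (A t)
  antitone : Antitone A
  abs_sub_le : ∀ t, ∀ᵐ ω ∂μ, |Y (t + 1) ω - Y t ω| ≤ c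
  condExp_sub_nonpos : ∀ t, ∀ᵐ ω ∂μ, ω ∈ A t → μ[Y (t + 1) - Y t|F t] ω ≤ 0

namespace NonposDriftOn

variable {Ω : Type*} {m : MeasurableSpace Ω} {μ : Measure Ω} {F : Filtration ℕ m}
  {Y : ℕ → Ω → ℝ} {A : ℕ → Set Ω} {y₀ c l : ℝ}

theorem integrable_sub [IsFiniteMeasure μ] (hY : NonposDriftOn F μ Y A c) (t : ℕ) :
    Integrable (Y (t + 1) - Y t) μ :=
  hY.adapted.integrable_sub_succ (hY.abs_sub_le t)

theorem ae_norm_indicator_exp_mul_le (hY : NonposDriftOn F μ Y A c)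
    (h0 : ∀ᵐ ω ∂μ, Y 0 ω = y₀) (hl : 0 ≤ l) (t : ℕ) :
    ∀ᵐ ω ∂μ, ‖(A t).indicator (fun ω => exp (l * Y t ω)) ω‖ ≤ exp (l * (y₀ + t * c)) := by
  filter_upwards [ae_abs_sub_le_of_abs_sub_succ_le h0 hY.abs_sub_le t] with ω hω
  refine (norm_indicator_le_norm_self _ ω).trans ?_
  rw [norm_of_nonneg (exp_pos _).le, exp_le_exp]
  exact mul_le_mul_of_nonneg_left (by linarith [(abs_le.mp hω).2]) hl

theorem stronglyMeasurable_indicator_exp_mul (hY : NonposDriftOn F μ Y A c) (t : ℕ) :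
    StronglyMeasurable[F t] ((A t).indicator fun ω => exp (l * Y t ω)) :=
  (((hY.adapted t).const_mul l).exp.indicator (hY.measurableSet t)).stronglyMeasurable

theorem integrable_indicator_exp_mul [IsFiniteMeasure μ] (hY : NonposDriftOn F μ Y A c)
    (h0 : ∀ᵐ ω ∂μ, Y 0 ω = y₀) (hl : 0 ≤ l) (t : ℕ) :
    Integrable ((A t).indicator fun ω => exp (l * Y t ω)) μ :=
  .of_bound ((hY.stronglyMeasurable_indicator_exp_mul t).mono (F.le t)).aestronglyMeasurable _
    (hY.ae_norm_indicator_exp_mul_le h0 hl t)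

theorem indicator_exp_mul_succ_le (hY : NonposDriftOn F μ Y A c) (t : ℕ) (ω : Ω) :
    (A (t + 1)).indicator (fun ω => exp (l * Y (t + 1) ω)) ω ≤
      (A t).indicator (fun ω => exp (l * Y t ω)) ω * exp (l * (Y (t + 1) - Y t) ω) := by
  by_cases hω : ω ∈ A (t + 1)
  · rw [Set.indicator_of_mem hω, Set.indicator_of_mem (hY.antitone t.le_succ hω), ← exp_add,
      Pi.sub_apply, ← mul_add, add_sub_cancel]
  · rw [Set.indicator_of_notMem hω]
    exact mul_nonneg (Set.indicator_nonneg (fun _ _ => (exp_pos _).le) ω) (exp_pos _).le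

variable [IsProbabilityMeasure μ]

theorem integral_indicator_exp_mul_succ_le (hY : NonposDriftOn F μ Y A c)
    (h0 : ∀ᵐ ω ∂μ, Y 0 ω = y₀) (hc : 0 < c) (hl : 0 ≤ l) (t : ℕ) :
    ∫ ω, (A (t + 1)).indicator (fun ω => exp (l * Y (t + 1) ω)) ω ∂μ ≤
      exp (l ^ 2 * c ^ 2 / 2) * ∫ ω, (A t).indicator (fun ω => exp (l * Y t ω)) ω ∂μ := by
  set G := (A t).indicator fun ω => exp (l * Y t ω)
  set E := fun ω => exp (l * (Y (t + 1) - Y t) ω)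
  have hG := hY.integrable_indicator_exp_mul h0 hl t
  have hE : Integrable E μ := integrable_exp_mul_of_mem_Icc
    (hY.integrable_sub t).1.aemeasurable ((hY.abs_sub_le t).mono fun _ => abs_le.mp)
  have hpull := condExp_stronglyMeasurable_mul_of_bound (F.le t)
    (hY.stronglyMeasurable_indicator_exp_mul t) hE _ (hY.ae_norm_indicator_exp_mul_le h0 hl t)
  have hcond : μ[G * E|F t] ≤ᵐ[μ] fun ω => G ω * exp (l ^ 2 * c ^ 2 / 2) := by
    filter_upwards [hpull, hY.condExp_sub_nonpos t, ae_condExp_exp_mul_le_of_condExp_nonpos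
      (F.le t) (hY.integrable_sub t) hc (hY.abs_sub_le t) hl] with ω hω hdrift hmgf
    rw [hω, Pi.mul_apply]
    by_cases hωt : ω ∈ A t
    · exact mul_le_mul_of_nonneg_left (hmgf (hdrift hωt))
        (Set.indicator_nonneg (fun _ _ => (exp_pos _).le) ω)
    · simp [G, Set.indicator_of_notMem hωt]
  calc ∫ ω, (A (t + 1)).indicator (fun ω => exp (l * Y (t + 1) ω)) ω ∂μ
      ≤ ∫ ω, (G * E) ω ∂μ :=
        integral_mono (hY.integrable_indicator_exp_mul h0 hl _)
          (hE.bdd_mul hG.1 (hY.ae_norm_indicator_exp_mul_le h0 hl t))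
          (hY.indicator_exp_mul_succ_le t)
    _ = ∫ ω, μ[G * E|F t] ω ∂μ := (integral_condExp (F.le t)).symm
    _ ≤ ∫ ω, G ω * exp (l ^ 2 * c ^ 2 / 2) ∂μ :=
        integral_mono_ae integrable_condExp (hG.mul_const _) hcond
    _ = exp (l ^ 2 * c ^ 2 / 2) * ∫ ω, G ω ∂μ := by rw [integral_mul_const, mul_comm]

theorem integral_indicator_exp_mul_le (hY : NonposDriftOn F μ Y A c)
    (h0 : ∀ᵐ ω ∂μ, Y 0 ω = y₀) (hc : 0 < c) (hl : 0 ≤ l) (t : ℕ) :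
    ∫ ω, (A t).indicator (fun ω => exp (l * Y t ω)) ω ∂μ ≤
      exp (l * y₀) * exp (l ^ 2 * c ^ 2 / 2) ^ t := by
  induction t with
  | zero =>
    refine (integral_mono_ae (hY.integrable_indicator_exp_mul h0 hl 0)
      (integrable_const (exp (l * y₀))) ?_).trans (by simp)
    filter_upwards [h0] with ω hω
    exact hω ▸ Set.indicator_le_self' (fun _ _ => (exp_pos _).le) ω
  | succ t ih =>
    calc _ ≤ exp (l ^ 2 * c ^ 2 / 2) * ∫ ω, (A t).indicator (fun ω => exp (l * Y t ω)) ω ∂μ :=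
          hY.integral_indicator_exp_mul_succ_le h0 hc hl t
      _ ≤ exp (l ^ 2 * c ^ 2 / 2) * (exp (l * y₀) * exp (l ^ 2 * c ^ 2 / 2) ^ t) := by gcongr
      _ = exp (l * y₀) * exp (l ^ 2 * c ^ 2 / 2) ^ (t + 1) := by ring

theorem measureReal_le_exp_mul (hY : NonposDriftOn F μ Y A c) (h0 : ∀ᵐ ω ∂μ, Y 0 ω = y₀)
    (hc : 0 < c) (hl : 0 ≤ l) {t : ℕ} {b : ℝ} (hb : ∀ ω ∈ A t, b ≤ Y t ω) :
    μ.real (A t) ≤ exp (l * (y₀ - b) + t * (l ^ 2 * c ^ 2 / 2)) := by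
  have hA : MeasurableSet (A t) := F.le t _ (hY.measurableSet t)
  have hmarkov : exp (l * b) * μ.real (A t) ≤
      ∫ ω, (A t).indicator (fun ω => exp (l * Y t ω)) ω ∂μ := by
    rw [mul_comm, ← smul_eq_mul, ← integral_indicator_const _ hA]
    exact integral_mono ((integrable_const _).indicator hA)
      (hY.integrable_indicator_exp_mul h0 hl t) fun ω => Set.indicator_le_indicator' fun hω =>
        exp_le_exp.2 (mul_le_mul_of_nonneg_left (hb ω hω) hl)
  refine le_of_mul_le_mul_left ?_ (exp_pos (l * b))
  calc exp (l * b) * μ.real (A t)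
      ≤ exp (l * y₀) * exp (l ^ 2 * c ^ 2 / 2) ^ t :=
        hmarkov.trans (hY.integral_indicator_exp_mul_le h0 hc hl t)
    _ = exp (l * b) * exp (l * (y₀ - b) + t * (l ^ 2 * c ^ 2 / 2)) := by
        rw [← exp_nat_mul, ← exp_add, ← exp_add]; ring_nf

theorem measureReal_le_exp_neg_sq (hY : NonposDriftOn F μ Y A c) (h0 : ∀ᵐ ω ∂μ, Y 0 ω = y₀)
    (hc : 0 < c) {t : ℕ} (ht : 0 < t) {b : ℝ} (hy₀b : y₀ ≤ b) (hb : ∀ ω ∈ A t, b ≤ Y t ω) :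
    μ.real (A t) ≤ exp (-(b - y₀) ^ 2 / (2 * t * c ^ 2)) := by
  -- the minimiser of the exponent in `measureReal_le_exp_mul`
  have hl : 0 ≤ (b - y₀) / (t * c ^ 2) := div_nonneg (sub_nonneg.2 hy₀b) (by positivity)
  refine (hY.measureReal_le_exp_mul h0 hc hl hb).trans_eq ?_
  congr 1
  field_simp
  ring

end NonposDriftOn

theorem nonposDriftOn_add_mul_of_condExp_sub_le {Ω : Type*} {m : MeasurableSpace Ω}
    {μ : Measure Ω} [IsFiniteMeasure μ] {F : Filtration ℕ m} {X : ℕ → Ω → ℝ} {R δ : ℝ}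
    (hX : Adapted F X) (hbd : ∀ t : ℕ, ∀ᵐ ω ∂μ, |X (t + 1) ω - X t ω| ≤ R)
    (hdrift : ∀ t : ℕ, ∀ᵐ ω ∂μ, 0 ≤ X t ω → (μ[X (t + 1) - X t|F t]) ω ≤ -δ)
    (hδ : 0 ≤ δ) (hδR : δ ≤ R) :
    NonposDriftOn F μ (fun t ω => X t ω + δ * t) (fun t => {ω | ∀ s ≤ t, 0 < X s ω})
      (2 * R) where
  adapted t := (hX t).add_const _
  measurableSet t := by
    simp only [Set.ofPred_forall]
    exact .iInter fun s => .iInter fun hs =>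
      measurableSet_lt measurable_const ((hX s).mono (F.mono hs) le_rfl)
  antitone _ _ hst _ hω s hs := hω s (hs.trans hst)
  abs_sub_le t := (hbd t).mono fun ω hω => by
    push_cast
    rw [abs_le] at hω ⊢
    constructor <;> linarith
  condExp_sub_nonpos t := by
    have hinc : (fun ω => X (t + 1) ω + δ * (t + 1 : ℕ)) - (fun ω => X t ω + δ * t) =
        X (t + 1) - X t + fun _ => δ := by
      funext ω; push_cast; simp only [Pi.add_apply, Pi.sub_apply]; ring
    filter_upwards [condExp_add (hX.integrable_sub_succ (hbd t)) (integrable_const δ) (F t),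
      hdrift t] with ω hω hdriftω hpos
    rw [hinc, hω, condExp_const (F.le t), Pi.add_apply]
    linarith [hdriftω (hpos t le_rfl).le]

/-- **Hitting-time estimate for supermartingales** (Lemma 2.1, part 1).
If `(X_t)` is adapted, starts at `x₀`, has increments bounded by `R`, and has
conditional drift at most `−δ < 0` on the event `{X_t ≥ 0}`, then for every
integer `t₁ ≥ 1` with `δ t₁ ≥ x₀`, the probability that `X` stays strictly
positive up to time `t₁` (i.e. `τ₀⁻ > t₁`) is at most
`exp(−(δ t₁ − x₀)²/(8 t₁ R²))`. -/
theorem supermartingale_hitting_zero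
    {Ω : Type*} {m : MeasurableSpace Ω} {μ : Measure Ω} [IsProbabilityMeasure μ]
    (F : Filtration ℕ m) (X : ℕ → Ω → ℝ) (hadapt : Adapted F X)
    (x₀ R δ : ℝ) (hR : 0 < R) (hδ : 0 < δ)
    (h0 : ∀ᵐ ω ∂μ, X 0 ω = x₀)
    (hbd : ∀ t : ℕ, ∀ᵐ ω ∂μ, |X (t + 1) ω - X t ω| ≤ R)
    (hdrift : ∀ t : ℕ, ∀ᵐ ω ∂μ, 0 ≤ X t ω → (μ[X (t + 1) - X t|F t]) ω ≤ -δ)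
    (t₁ : ℕ) (ht₁ : 1 ≤ t₁) (hx : x₀ ≤ δ * t₁) :
    (μ {ω | ∀ s ≤ t₁, 0 < X s ω}).toReal ≤
      Real.exp (-(δ * t₁ - x₀) ^ 2 / (8 * t₁ * R ^ 2)) := by
  by_cases hx₀ : x₀ ≤ 0
  · have hnull : μ {ω | ∀ s ≤ t₁, 0 < X s ω} = 0 := by
      refine measure_mono_null (t := {ω | 0 < X 0 ω}) (fun ω hω => hω 0 t₁.zero_le) ?_
      rw [measure_eq_zero_iff_ae_notMem]
      filter_upwards [h0] with ω hω
      simpa [hω] using hx₀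
    rw [hnull, ENNReal.toReal_zero]
    positivity
  -- the drift at time `0` is at least `-R`
  have hδR : δ ≤ R := by
    have := le_of_ae_le_of_ae_condExp_le (F.le 0) (hadapt.integrable_sub_succ (hbd 0))
      ((hbd 0).mono fun ω hω => (abs_le.1 hω).1)
      (((hdrift 0).and h0).mono fun ω hω => hω.1 (hω.2 ▸ (not_le.1 hx₀).le))
    linarith
  have hY := nonposDriftOn_add_mul_of_condExp_sub_le hadapt hbd hdrift hδ.le hδR
  calc (μ {ω | ∀ s ≤ t₁, 0 < X s ω}).toReal
      ≤ exp (-(δ * t₁ - x₀) ^ 2 / (2 * t₁ * (2 * R) ^ 2)) :=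
        hY.measureReal_le_exp_neg_sq (by simpa using h0) (by positivity) ht₁ hx
          fun ω hω => by simpa using (hω t₁ le_rfl).le
    _ = Real.exp (-(δ * t₁ - x₀) ^ 2 / (8 * t₁ * R ^ 2)) := by ring_nf
end

section
/- Let (X_t)_{t≥0} be a real-valued discrete-time process adapted to a filtration (F_t)_{t≥0}, with X_0 = x_0 ≤ 0 almost surely, |X_{t+1} − X_t| ≤ R almost surely for all t (for some R > 0), and E[X_{t+1} − X_t | F_t] ≤ 0 on the event {X_t ≥ 0} for all t. Let τ_{x₁}⁺ = inf{t ≥ 0 : X_t ≥ x₁}. Then for every x₁ > R and every integer t₂ ≥ 1, P(τ_{x₁}⁺ ≤ t₂) ≤ 2 exp(−(x₁ − R)²/(8 t₂ R²)). -/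
/-!
Let `ξ_s = 1{X_s ≥ 0} (X_{s+1} - X_s)`. These are bounded by `R` and have nonpositive
conditional drift, so their centred partial sums `M_n = ∑_{s<n} (ξ_s - E[ξ_s | F_s])` form a
martingale with `M_s - M_u ≥ ∑_{u ≤ j < s} ξ_j`. If `X_s ≥ x₁`, let `u ≤ s` be the time just after
the last visit of `X` to `(-∞, 0)` before `s` (or `u = 0`): then `X_u ≤ R` and
`∑_{u ≤ j < s} ξ_j = X_s - X_u ≥ x₁ - R`, so `|M_r| ≥ (x₁ - R) / 2` for `r = s` or `r = u`.
The conditional Hoeffding lemma bounds `E[exp (±λ (ξ_s - E[ξ_s | F_s])) | F_s]` by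
`exp (λ² R² / 2)`, and Doob's maximal inequality for the submartingales `exp (±λ M_n)`, with
`λ = (x₁ - R) / (2 t₂ R²)`, bounds each of the two tails by `exp (-(x₁ - R)² / (8 t₂ R²))`.
-/

open MeasureTheory ProbabilityTheory Real Finset

lemma integral_smul_dirac_add_smul_dirac {p q a b : ℝ} (hp : 0 ≤ p) (hq : 0 ≤ q) (f : ℝ → ℝ) :
    ∫ x, f x ∂(ENNReal.ofReal p • Measure.dirac a + ENNReal.ofReal q • Measure.dirac b)
      = p * f a + q * f b := by
  have hint (y : ℝ) (r : ℝ) : Integrable f (ENNReal.ofReal r • Measure.dirac y) :=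
    (integrable_dirac (by simp)).smul_measure (by simp)
  rw [integral_add_measure (hint a p) (hint b q), integral_smul_measure, integral_smul_measure,
    integral_dirac, integral_dirac, ENNReal.toReal_ofReal hp, ENNReal.toReal_ofReal hq,
    smul_eq_mul, smul_eq_mul]

-- Hoeffding's lemma for the two-point law on `{-R, R}` with mean `c`.
lemma exp_neg_mul_mul_cosh_add_sinh_le {R c : ℝ} (hR : 0 < R) (hc : |c| ≤ R) (l : ℝ) :
    exp (-(l * c)) * (cosh (l * R) + sinh (l * R) / R * c) ≤ exp (l ^ 2 * R ^ 2 / 2) := by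
  obtain ⟨hc₁, hc₂⟩ := abs_le.mp hc
  set p := (R + c) / (2 * R)
  set q := (R - c) / (2 * R)
  have hp : 0 ≤ p := div_nonneg (by linarith) (by positivity)
  have hq : 0 ≤ q := div_nonneg (by linarith) (by positivity)
  set ν : Measure ℝ := ENNReal.ofReal p • Measure.dirac R + ENNReal.ofReal q • Measure.dirac (-R)
  have : IsProbabilityMeasure ν := ⟨by
    simp only [ν, Measure.add_apply, Measure.smul_apply, measure_univ, smul_eq_mul, mul_one]
    rw [← ENNReal.ofReal_add hp hq, show p + q = 1 by simp only [p, q]; field_simp; ring,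
      ENNReal.ofReal_one]⟩
  have hmean : ∫ x, (x - c) ∂ν = 0 := by
    rw [integral_smul_dirac_add_smul_dirac hp hq]
    field_simp
    ring
  have hIcc : ∀ᵐ x ∂ν, x - c ∈ Set.Icc (-R - c) (R - c) := by
    refine ae_add_measure_iff.2 ⟨Measure.ae_smul_measure ?_ _, Measure.ae_smul_measure ?_ _⟩ <;>
      simp [ae_dirac_eq, hR.le]
  have h := (hasSubgaussianMGF_of_mem_Icc_of_integral_eq_zero (by fun_prop) hIcc hmean).mgf_le l
  rw [mgf, integral_smul_dirac_add_smul_dirac hp hq] at h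
  convert h using 1
  · simp only [p, q, cosh_eq, sinh_eq, mul_sub, mul_neg, exp_sub, exp_neg]
    field_simp
    ring
  · rw [show R - c - (-R - c) = 2 * R by ring]
    push_cast
    rw [norm_of_nonneg (by positivity)]
    congr 1
    ring

lemma exp_mul_le_cosh_add_sinh_mul {R x : ℝ} (hR : 0 < R) (hx : |x| ≤ R) (l : ℝ) :
    exp (l * x) ≤ cosh (l * R) + sinh (l * R) / R * x := by
  obtain ⟨hx₁, hx₂⟩ := abs_le.mp hx
  have h := convexOn_exp.2 (Set.mem_univ (-(l * R))) (Set.mem_univ (l * R))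
    (div_nonneg (by linarith : 0 ≤ R - x) (by positivity : 0 ≤ 2 * R))
    (div_nonneg (by linarith : 0 ≤ R + x) (by positivity : 0 ≤ 2 * R)) (by field_simp; ring)
  have harg : ((R - x) / (2 * R)) • -(l * R) + ((R + x) / (2 * R)) • (l * R) = l * x := by
    simp only [smul_eq_mul]; field_simp; ring
  have hval : ((R - x) / (2 * R)) • exp (-(l * R)) + ((R + x) / (2 * R)) • exp (l * R)
      = cosh (l * R) + sinh (l * R) / R * x := by
    rw [cosh_eq, sinh_eq, smul_eq_mul, smul_eq_mul]; field_simp; ring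
  rwa [harg, hval] at h

section ConditionalHoeffding

variable {Ω : Type*} {m m0 : MeasurableSpace Ω} {μ : Measure Ω} [IsFiniteMeasure μ]

lemma ae_condExp_exp_mul_sub_condExp_le (hm : m ≤ m0) {ξ : Ω → ℝ}
    (hξ : AEStronglyMeasurable ξ μ) {R : ℝ} (hR : 0 < R) (hbd : ∀ᵐ ω ∂μ, |ξ ω| ≤ R) (l : ℝ) :
    ∀ᵐ ω ∂μ, μ[fun w => exp (l * (ξ w - μ[ξ|m] w))|m] ω ≤ exp (l ^ 2 * R ^ 2 / 2) := by
  set c := μ[ξ|m]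
  have hξ_Icc : ∀ᵐ ω ∂μ, ξ ω ∈ Set.Icc (-R) R := hbd.mono fun _ ↦ abs_le.mp
  have hξ_int : Integrable ξ μ := .of_mem_Icc (-R) R hξ.aemeasurable hξ_Icc
  have hc_Icc : ∀ᵐ ω ∂μ, c ω ∈ Set.Icc (-R) R :=
    (ae_bdd_abs_condExp_of_ae_bdd_abs hbd).mono fun _ => abs_le.mp
  have hc_meas : StronglyMeasurable[m] c := stronglyMeasurable_condExp
  have hexp_int : Integrable (fun w => exp (l * ξ w)) μ :=
    integrable_exp_mul_of_mem_Icc hξ.aemeasurable hξ_Icc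
  have hpull : μ[fun w => exp (l * (ξ w - c w))|m]
      =ᵐ[μ] fun w => exp (-(l * c w)) * μ[fun w => exp (l * ξ w)|m] w := by
    have hfactor : (fun w => exp (l * (ξ w - c w)))
        = (fun w => exp (-(l * c w))) * fun w => exp (l * ξ w) := by
      ext w; rw [Pi.mul_apply, ← exp_add]; congr 1; ring
    rw [hfactor]
    refine condExp_mul_of_stronglyMeasurable_left (by fun_prop) ?_ hexp_int
    rw [← hfactor]
    refine integrable_exp_mul_of_mem_Icc (a := -R - R) (b := R + R)
      (hξ.aemeasurable.sub (hc_meas.mono hm).aemeasurable) ?_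
    filter_upwards [hξ_Icc, hc_Icc] with ω h₁ h₂
    exact ⟨by linarith [h₁.1, h₂.2], by linarith [h₁.2, h₂.1]⟩
  have hchord : μ[fun w => exp (l * ξ w)|m]
      ≤ᵐ[μ] fun w => cosh (l * R) + sinh (l * R) / R * c w := by
    have h_aff : μ[(fun _ => cosh (l * R)) + (sinh (l * R) / R) • ξ|m]
        =ᵐ[μ] fun w => cosh (l * R) + sinh (l * R) / R * c w := by
      filter_upwards [condExp_add (integrable_const (cosh (l * R)))
        (hξ_int.smul (sinh (l * R) / R)) m, condExp_smul (sinh (l * R) / R) ξ m] with ω h₁ h₂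
      simp [h₁, h₂, condExp_const hm, c]
    refine (condExp_mono hexp_int ((integrable_const _).add (hξ_int.smul _)) ?_).trans h_aff.le
    filter_upwards [hbd] with ω hω
    simpa using exp_mul_le_cosh_add_sinh_mul hR hω l
  filter_upwards [hpull, hchord, hc_Icc] with ω h_pull h_chord h_c
  rw [h_pull]
  calc exp (-(l * c ω)) * μ[fun w => exp (l * ξ w)|m] ω
      ≤ exp (-(l * c ω)) * (cosh (l * R) + sinh (l * R) / R * c ω) := by gcongr
    _ ≤ exp (l ^ 2 * R ^ 2 / 2) := exp_neg_mul_mul_cosh_add_sinh_le hR (abs_le.mpr h_c) l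

end ConditionalHoeffding

section ExponentialMaximal

variable {Ω : Type*} {m0 : MeasurableSpace Ω} {μ : Measure Ω} {F : Filtration ℕ m0}
  {ζ : ℕ → Ω → ℝ}

lemma stronglyMeasurable_sum_range (hmeas : ∀ s, StronglyMeasurable[F (s + 1)] (ζ s)) (n : ℕ) :
    StronglyMeasurable[F n] fun ω => ∑ j ∈ range n, ζ j ω :=
  Finset.stronglyMeasurable_fun_sum _ fun j hj =>
    (hmeas j).mono (F.mono (Finset.mem_range.mp hj))

variable [IsProbabilityMeasure μ]

lemma integrable_exp_mul_sum_range (hmeas : ∀ s, StronglyMeasurable[F (s + 1)] (ζ s))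
    {C : ℝ} (hbd : ∀ s, ∀ᵐ ω ∂μ, |ζ s ω| ≤ C) (l : ℝ) (n : ℕ) :
    Integrable (fun ω => exp (l * ∑ j ∈ range n, ζ j ω)) μ := by
  refine integrable_exp_mul_of_mem_Icc (a := -(n * C)) (b := n * C)
    ((stronglyMeasurable_sum_range hmeas n).mono (F.le n)).aemeasurable ?_
  filter_upwards [ae_all_iff.mpr hbd] with ω hω
  have : |∑ j ∈ range n, ζ j ω| ≤ n * C := by
    simpa using (Finset.abs_sum_le_sum_abs _ (range n)).trans (Finset.sum_le_sum fun j _ => hω j)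
  exact abs_le.mp this

lemma condExp_exp_mul_sum_range_succ (hmeas : ∀ s, StronglyMeasurable[F (s + 1)] (ζ s))
    {C : ℝ} (hbd : ∀ s, ∀ᵐ ω ∂μ, |ζ s ω| ≤ C) (l : ℝ) (n : ℕ) :
    μ[fun ω => exp (l * ∑ j ∈ range (n + 1), ζ j ω)|F n]
      =ᵐ[μ] fun ω => exp (l * ∑ j ∈ range n, ζ j ω) * μ[fun ω => exp (l * ζ n ω)|F n] ω := by
  have hsplit : (fun ω => exp (l * ∑ j ∈ range (n + 1), ζ j ω))
      = (fun ω => exp (l * ∑ j ∈ range n, ζ j ω)) * fun ω => exp (l * ζ n ω) := by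
    ext ω; simp only [Pi.mul_apply, sum_range_succ, mul_add, exp_add]
  rw [hsplit]
  refine condExp_mul_of_stronglyMeasurable_left
    (continuous_exp.comp_stronglyMeasurable ((stronglyMeasurable_sum_range hmeas n).const_mul l))
    (hsplit ▸ integrable_exp_mul_sum_range hmeas hbd l (n + 1)) ?_
  exact integrable_exp_mul_of_mem_Icc ((hmeas n).mono (F.le _)).aemeasurable
    ((hbd n).mono fun _ => abs_le.mp)

lemma submartingale_exp_mul_sum_range (hmeas : ∀ s, StronglyMeasurable[F (s + 1)] (ζ s))
    {C : ℝ} (hbd : ∀ s, ∀ᵐ ω ∂μ, |ζ s ω| ≤ C) (hmean : ∀ s, μ[ζ s|F s] =ᵐ[μ] 0) (l : ℝ) :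
    Submartingale (fun n ω => exp (l * ∑ j ∈ range n, ζ j ω)) F μ := by
  refine submartingale_nat (fun n => continuous_exp.comp_stronglyMeasurable
    ((stronglyMeasurable_sum_range hmeas n).const_mul l)) (integrable_exp_mul_sum_range hmeas hbd l)
    fun n => ?_
  have hζ_int : Integrable (ζ n) μ :=
    .of_mem_Icc (-C) C ((hmeas n).mono (F.le _)).aemeasurable ((hbd n).mono fun _ => abs_le.mp)
  -- conditional Jensen: `1 = exp μ[l • ζ n|F n] ≤ μ[exp (l * ζ n)|F n]`
  have hjensen := convexOn_exp.map_condExp_le_univ (F.le n) continuous_exp.lowerSemicontinuous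
    (hζ_int.smul l) (integrable_exp_mul_of_mem_Icc ((hmeas n).mono (F.le _)).aemeasurable
      ((hbd n).mono fun _ => abs_le.mp) (t := l))
  filter_upwards [condExp_exp_mul_sum_range_succ hmeas hbd l n, hjensen, condExp_smul l (ζ n) (F n),
    hmean n] with ω h_succ h_jensen h_smul h_mean
  rw [h_succ]
  refine le_mul_of_one_le_right (exp_pos _).le ?_
  simpa [h_smul, h_mean, Function.comp_def] using h_jensen

lemma integral_exp_mul_sum_range_le (hmeas : ∀ s, StronglyMeasurable[F (s + 1)] (ζ s))
    {C : ℝ} (hbd : ∀ s, ∀ᵐ ω ∂μ, |ζ s ω| ≤ C) {l K : ℝ} (hK : 0 ≤ K)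
    (hmgf : ∀ s, ∀ᵐ ω ∂μ, μ[fun w => exp (l * ζ s w)|F s] ω ≤ K) (n : ℕ) :
    ∫ ω, exp (l * ∑ j ∈ range n, ζ j ω) ∂μ ≤ K ^ n := by
  induction n with
  | zero => simp
  | succ n ih =>
    have hint := integrable_exp_mul_sum_range hmeas hbd l n
    calc ∫ ω, exp (l * ∑ j ∈ range (n + 1), ζ j ω) ∂μ
        = ∫ ω, μ[fun ω => exp (l * ∑ j ∈ range (n + 1), ζ j ω)|F n] ω ∂μ :=
          (integral_condExp (F.le n)).symm
      _ = ∫ ω, exp (l * ∑ j ∈ range n, ζ j ω) * μ[fun ω => exp (l * ζ n ω)|F n] ω ∂μ :=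
          integral_congr_ae (condExp_exp_mul_sum_range_succ hmeas hbd l n)
      _ ≤ ∫ ω, exp (l * ∑ j ∈ range n, ζ j ω) * K ∂μ := by
          refine integral_mono_ae ?_ (hint.mul_const K) ?_
          · exact integrable_condExp.congr (condExp_exp_mul_sum_range_succ hmeas hbd l n)
          · filter_upwards [hmgf n] with ω hω
            exact mul_le_mul_of_nonneg_left hω (exp_pos _).le
      _ ≤ K ^ (n + 1) := by
          rw [integral_mul_const, pow_succ]
          exact mul_le_mul_of_nonneg_right ih hK

lemma measureReal_exists_le_sum_range_ge_le (hmeas : ∀ s, StronglyMeasurable[F (s + 1)] (ζ s))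
    {C : ℝ} (hbd : ∀ s, ∀ᵐ ω ∂μ, |ζ s ω| ≤ C) (hmean : ∀ s, μ[ζ s|F s] =ᵐ[μ] 0)
    {l K : ℝ} (hl : 0 ≤ l) (hK : 0 ≤ K)
    (hmgf : ∀ s, ∀ᵐ ω ∂μ, μ[fun w => exp (l * ζ s w)|F s] ω ≤ K) (a : ℝ) (n : ℕ) :
    μ.real {ω | ∃ s ≤ n, a ≤ ∑ j ∈ range s, ζ j ω} ≤ exp (-(l * a)) * K ^ n := by
  set f := fun n ω => exp (l * ∑ j ∈ range n, ζ j ω)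
  set ε : NNReal := ⟨exp (l * a), (exp_pos _).le⟩
  set E := {ω | (ε : ℝ) ≤ (range (n + 1)).sup' nonempty_range_add_one fun k => f k ω}
  have hdoob := maximal_ineq (submartingale_exp_mul_sum_range hmeas hbd hmean l)
    (fun _ _ => (exp_pos _).le) (ε := ε) n
  have hsub : {ω | ∃ s ≤ n, a ≤ ∑ j ∈ range s, ζ j ω} ⊆ E := by
    rintro ω ⟨s, hs, ha⟩
    exact (exp_le_exp.mpr (mul_le_mul_of_nonneg_left ha hl)).trans
      (le_sup' (fun k => f k ω) (mem_range.mpr (Nat.lt_succ_of_le hs)))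
  have hE : exp (l * a) * μ.real E ≤ K ^ n :=
    calc exp (l * a) * μ.real E = (ε * μ E).toReal := by
          rw [ENNReal.toReal_mul, ENNReal.coe_toReal, measureReal_def]; rfl
      _ ≤ (ENNReal.ofReal (∫ ω in E, f n ω ∂μ)).toReal :=
          ENNReal.toReal_mono ENNReal.ofReal_ne_top hdoob
      _ = ∫ ω in E, f n ω ∂μ := ENNReal.toReal_ofReal (integral_nonneg fun _ => (exp_pos _).le)
      _ ≤ ∫ ω, f n ω ∂μ := setIntegral_le_integral (integrable_exp_mul_sum_range hmeas hbd l n)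
          (.of_forall fun _ => (exp_pos _).le)
      _ ≤ K ^ n := integral_exp_mul_sum_range_le hmeas hbd hK hmgf n
  calc μ.real {ω | ∃ s ≤ n, a ≤ ∑ j ∈ range s, ζ j ω} ≤ μ.real E := measureReal_mono hsub
    _ ≤ exp (-(l * a)) * K ^ n := by
      rwa [exp_neg, inv_mul_eq_div, le_div_iff₀ (exp_pos _), mul_comm]

lemma measureReal_exists_le_abs_sum_range_sub_condExp_ge_le {ξ : ℕ → Ω → ℝ}
    (hmeas : ∀ s, StronglyMeasurable[F (s + 1)] (ξ s)) {R : ℝ} (hR : 0 < R)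
    (hbd : ∀ s, ∀ᵐ ω ∂μ, |ξ s ω| ≤ R) {l : ℝ} (hl : 0 ≤ l) (a : ℝ) (n : ℕ) :
    μ.real {ω | ∃ s ≤ n, a ≤ |∑ j ∈ range s, (ξ j ω - μ[ξ j|F j] ω)|}
      ≤ 2 * (exp (-(l * a)) * exp (l ^ 2 * R ^ 2 / 2) ^ n) := by
  set ζ := fun j ω => ξ j ω - μ[ξ j|F j] ω
  have hζ_meas s : StronglyMeasurable[F (s + 1)] (ζ s) :=
    (hmeas s).sub (stronglyMeasurable_condExp.mono (F.mono s.le_succ))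
  have hζ_bd s : ∀ᵐ ω ∂μ, |ζ s ω| ≤ 2 * R := by
    filter_upwards [hbd s, ae_bdd_abs_condExp_of_ae_bdd_abs (m := F s) (hbd s)] with ω h₁ h₂
    exact (abs_sub _ _).trans (by linarith)
  have hζ_mean s : μ[ζ s|F s] =ᵐ[μ] 0 := by
    have hξ_int : Integrable (ξ s) μ :=
      .of_mem_Icc (-R) R ((hmeas s).mono (F.le _)).aemeasurable ((hbd s).mono fun _ => abs_le.mp)
    change μ[ξ s - μ[ξ s|F s]|F s] =ᵐ[μ] 0
    filter_upwards [condExp_sub hξ_int (integrable_condExp (m := F s) (f := ξ s)) (F s),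
      condExp_condExp_of_le (f := ξ s) le_rfl (F.le s)] with ω h_sub h_tower
    simp [h_sub, h_tower]
  have hhoeffding s (l : ℝ) :=
    ae_condExp_exp_mul_sub_condExp_le (F.le s) ((hmeas s).mono (F.le _)).aestronglyMeasurable hR
      (hbd s) l
  have hupper := measureReal_exists_le_sum_range_ge_le hζ_meas hζ_bd hζ_mean hl (exp_pos _).le
    (fun s => hhoeffding s l) a n
  have hlower := measureReal_exists_le_sum_range_ge_le (ζ := fun j ω => -ζ j ω)
    (fun s => (hζ_meas s).neg) (fun s => by simpa using hζ_bd s)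
    (fun s => (condExp_neg (ζ s) (F s)).trans (by filter_upwards [hζ_mean s] with ω hω; simp [hω]))
    hl (exp_pos _).le (fun s => by simpa [neg_sq, mul_neg, neg_mul] using hhoeffding s (-l)) a n
  calc μ.real {ω | ∃ s ≤ n, a ≤ |∑ j ∈ range s, ζ j ω|}
      ≤ μ.real ({ω | ∃ s ≤ n, a ≤ ∑ j ∈ range s, ζ j ω}
          ∪ {ω | ∃ s ≤ n, a ≤ ∑ j ∈ range s, -ζ j ω}) := by
        refine measureReal_mono fun ω ⟨s, hs, ha⟩ => ?_
        rcases le_abs.mp ha with h | h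
        exacts [Or.inl ⟨s, hs, h⟩, Or.inr ⟨s, hs, by rwa [sum_neg_distrib]⟩]
    _ ≤ _ := (measureReal_union_le _ _).trans (by linarith)

end ExponentialMaximal

lemma exists_le_forall_mem_Ico_nonneg {x : ℕ → ℝ} {R : ℝ} (hR : 0 ≤ R) (h0 : x 0 ≤ 0)
    (hbd : ∀ t, x (t + 1) - x t ≤ R) (s : ℕ) : ∃ u ≤ s, x u ≤ R ∧ ∀ j ∈ Ico u s, 0 ≤ x j := by
  induction s with
  | zero => exact ⟨0, le_rfl, h0.trans hR, by simp⟩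
  | succ s ih =>
    by_cases hs : 0 ≤ x s
    · obtain ⟨u, hu, hxu, hpos⟩ := ih
      refine ⟨u, hu.trans s.le_succ, hxu, fun j hj => ?_⟩
      obtain ⟨huj, hjs⟩ := mem_Ico.mp hj
      rcases (Nat.lt_succ_iff.mp hjs).lt_or_eq with hjs' | rfl
      exacts [hpos j (mem_Ico.mpr ⟨huj, hjs'⟩), hs]
    · exact ⟨s + 1, le_rfl, by linarith [hbd s], by simp⟩

lemma exists_le_abs_sum_range_ge {x d c : ℕ → ℝ} {R y : ℝ} (hR : 0 ≤ R) (h0 : x 0 ≤ 0)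
    (hbd : ∀ t, x (t + 1) - x t ≤ R) (hd : ∀ j, 0 ≤ x j → d j = x (j + 1) - x j)
    (hc : ∀ j, c j ≤ 0) {s : ℕ} (hs : y ≤ x s) :
    ∃ r ≤ s, (y - R) / 2 ≤ |∑ j ∈ range r, (d j - c j)| := by
  obtain ⟨u, hus, hxu, hpos⟩ := exists_le_forall_mem_Ico_nonneg hR h0 hbd s
  have hgain : y - R ≤ ∑ j ∈ Ico u s, (d j - c j) :=
    calc y - R ≤ x s - x u := by linarith
      _ = ∑ j ∈ Ico u s, d j := by
        rw [← sum_Ico_sub x hus]; exact (sum_congr rfl fun j hj => hd j (hpos j hj)).symm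
      _ ≤ ∑ j ∈ Ico u s, (d j - c j) := sum_le_sum fun j _ => by linarith [hc j]
  rw [sum_Ico_eq_sub _ hus] at hgain
  by_cases hu : (y - R) / 2 ≤ |∑ j ∈ range u, (d j - c j)|
  · exact ⟨u, hus, hu⟩
  · refine ⟨s, le_rfl, ?_⟩
    rw [not_le] at hu
    linarith [le_abs_self (∑ j ∈ range s, (d j - c j)), neg_abs_le (∑ j ∈ range u, (d j - c j))]

-- The Chernoff exponent `-l a + n l² R² / 2` at its minimiser `l = a / (n R²)`.
lemma exp_neg_mul_mul_exp_pow_eq (a R : ℝ) (n : ℕ) :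
    exp (-(a / (n * R ^ 2) * a)) * exp ((a / (n * R ^ 2)) ^ 2 * R ^ 2 / 2) ^ n
      = exp (-a ^ 2 / (2 * n * R ^ 2)) := by
  rw [← exp_nat_mul, ← exp_add]
  congr 1
  rcases eq_or_ne ((n : ℝ) * R ^ 2) 0 with h | h
  · simp [h, mul_assoc]
  · field_simp
    ring

section IncrementOnNonneg

variable {Ω : Type*} {m0 : MeasurableSpace Ω} {μ : Measure Ω} {F : Filtration ℕ m0}
  {X : ℕ → Ω → ℝ} {s : ℕ}

noncomputable def incrementOnNonneg (X : ℕ → Ω → ℝ) (s : ℕ) : Ω → ℝ :=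
  {ω | 0 ≤ X s ω}.indicator (X (s + 1) - X s)

lemma incrementOnNonneg_of_nonneg {ω : Ω} (h : 0 ≤ X s ω) :
    incrementOnNonneg X s ω = X (s + 1) ω - X s ω :=
  Set.indicator_of_mem (show ω ∈ {ω | 0 ≤ X s ω} from h) _

lemma MeasureTheory.Adapted.measurableSet_nonneg (hadapt : Adapted F X) (s : ℕ) :
    MeasurableSet[F s] {ω | 0 ≤ X s ω} :=
  measurableSet_le measurable_const (hadapt s)

lemma MeasureTheory.Adapted.stronglyMeasurable_increment (hadapt : Adapted F X) (s : ℕ) :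
    StronglyMeasurable[F (s + 1)] (X (s + 1) - X s) :=
  (hadapt (s + 1)).stronglyMeasurable.sub ((hadapt s).stronglyMeasurable.mono (F.mono s.le_succ))

lemma MeasureTheory.Adapted.stronglyMeasurable_incrementOnNonneg (hadapt : Adapted F X) (s : ℕ) :
    StronglyMeasurable[F (s + 1)] (incrementOnNonneg X s) :=
  (hadapt.stronglyMeasurable_increment s).indicator
    (F.mono s.le_succ _ (hadapt.measurableSet_nonneg s))

lemma ae_abs_incrementOnNonneg_le {R : ℝ} (hR : 0 ≤ R)
    (hbd : ∀ᵐ ω ∂μ, |X (s + 1) ω - X s ω| ≤ R) : ∀ᵐ ω ∂μ, |incrementOnNonneg X s ω| ≤ R := by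
  filter_upwards [hbd] with ω hω
  by_cases h : 0 ≤ X s ω
  · rwa [incrementOnNonneg_of_nonneg h]
  · simpa [incrementOnNonneg, h] using hR

lemma ae_condExp_incrementOnNonneg_nonpos [IsFiniteMeasure μ] (hadapt : Adapted F X) {R : ℝ}
    (hbd : ∀ᵐ ω ∂μ, |X (s + 1) ω - X s ω| ≤ R)
    (hdrift : ∀ᵐ ω ∂μ, 0 ≤ X s ω → μ[X (s + 1) - X s|F s] ω ≤ 0) :
    ∀ᵐ ω ∂μ, μ[incrementOnNonneg X s|F s] ω ≤ 0 := by
  have hint : Integrable (X (s + 1) - X s) μ :=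
    .of_bound ((hadapt.stronglyMeasurable_increment s).mono (F.le _)).aestronglyMeasurable R hbd
  filter_upwards [condExp_indicator hint (hadapt.measurableSet_nonneg s), hdrift]
    with ω h_ind h_drift
  rw [incrementOnNonneg, h_ind]
  by_cases h : 0 ≤ X s ω
  · simpa [h] using h_drift h
  · simp [h]

end IncrementOnNonneg

theorem supermartingale_no_upcrossing_general
    {Ω : Type*} {m : MeasurableSpace Ω} {μ : Measure Ω} [IsProbabilityMeasure μ]
    (F : Filtration ℕ m) (X : ℕ → Ω → ℝ) (hadapt : Adapted F X)
    (x₀ R : ℝ) (hR : 0 < R) (hx₀ : x₀ ≤ 0)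
    (h0 : ∀ᵐ ω ∂μ, X 0 ω = x₀)
    (hbd : ∀ t : ℕ, ∀ᵐ ω ∂μ, |X (t + 1) ω - X t ω| ≤ R)
    (hdrift : ∀ t : ℕ, ∀ᵐ ω ∂μ, 0 ≤ X t ω → (μ[X (t + 1) - X t|F t]) ω ≤ 0)
    (x₁ : ℝ) (hx₁ : R < x₁) (t₂ : ℕ) :
    (μ {ω | ∃ s ≤ t₂, x₁ ≤ X s ω}).toReal ≤
      2 * Real.exp (-(x₁ - R) ^ 2 / (8 * t₂ * R ^ 2)) := by
  set a := (x₁ - R) / 2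
  have ha : 0 ≤ a := div_nonneg (by linarith) zero_le_two
  set ξ := incrementOnNonneg X
  have hhit : {ω | ∃ s ≤ t₂, x₁ ≤ X s ω}
      ≤ᵐ[μ] {ω | ∃ s ≤ t₂, a ≤ |∑ j ∈ range s, (ξ j ω - μ[ξ j|F j] ω)|} := by
    filter_upwards [h0, ae_all_iff.mpr hbd, ae_all_iff.mpr fun j =>
      ae_condExp_incrementOnNonneg_nonpos hadapt (hbd j) (hdrift j)] with ω h0ω hbdω hdriftω
    rintro ⟨s, hs, hx⟩
    obtain ⟨r, hr, hra⟩ := exists_le_abs_sum_range_ge (x := (X · ω)) hR.le (h0ω.trans_le hx₀)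
      (fun t => (le_abs_self _).trans (hbdω t)) (fun j hj => incrementOnNonneg_of_nonneg hj)
      hdriftω hx
    exact ⟨r, hr.trans hs, hra⟩
  calc (μ {ω | ∃ s ≤ t₂, x₁ ≤ X s ω}).toReal
      ≤ μ.real {ω | ∃ s ≤ t₂, a ≤ |∑ j ∈ range s, (ξ j ω - μ[ξ j|F j] ω)|} :=
        ENNReal.toReal_mono (measure_ne_top _ _) (measure_mono_ae hhit)
    _ ≤ 2 * (exp (-(a / (t₂ * R ^ 2) * a)) * exp ((a / (t₂ * R ^ 2)) ^ 2 * R ^ 2 / 2) ^ t₂) :=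
        measureReal_exists_le_abs_sum_range_sub_condExp_ge_le
          hadapt.stronglyMeasurable_incrementOnNonneg hR
          (fun s => ae_abs_incrementOnNonneg_le hR.le (hbd s))
          (by positivity) a t₂
    _ = 2 * exp (-(x₁ - R) ^ 2 / (8 * t₂ * R ^ 2)) := by
        rw [exp_neg_mul_mul_exp_pow_eq]
        congr 2
        ring

/-- **Hitting-time estimate** (Lemma 2.1, part 2). If `(X_t)` is adapted,
starts at `x₀ ≤ 0`, has increments bounded by `R`, and has nonpositive
conditional drift on the event `{X_t ≥ 0}`, then for every `x₁ > R` and every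
integer `t₂ ≥ 1`, `P(τ_{x₁}⁺ ≤ t₂) ≤ 2 exp(−(x₁ − R)²/(8 t₂ R²))`. -/
theorem supermartingale_no_upcrossing
    {Ω : Type*} {m : MeasurableSpace Ω} {μ : Measure Ω} [IsProbabilityMeasure μ]
    (F : Filtration ℕ m) (X : ℕ → Ω → ℝ) (hadapt : Adapted F X)
    (x₀ R : ℝ) (hR : 0 < R) (hx₀ : x₀ ≤ 0)
    (h0 : ∀ᵐ ω ∂μ, X 0 ω = x₀)
    (hbd : ∀ t : ℕ, ∀ᵐ ω ∂μ, |X (t + 1) ω - X t ω| ≤ R)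
    (hdrift : ∀ t : ℕ, ∀ᵐ ω ∂μ, 0 ≤ X t ω → (μ[X (t + 1) - X t|F t]) ω ≤ 0)
    (x₁ : ℝ) (hx₁ : R < x₁) (t₂ : ℕ) (ht₂ : 1 ≤ t₂) :
    (μ {ω | ∃ s ≤ t₂, x₁ ≤ X s ω}).toReal ≤
      2 * Real.exp (-(x₁ - R) ^ 2 / (8 * t₂ * R ^ 2)) :=
  supermartingale_no_upcrossing_general F X hadapt x₀ R hR hx₀ h0 hbd hdrift x₁ hx₁ t₂
end

section
/- Let (X_t)_{t≥0} be a real-valued discrete-time process adapted to a filtration (F_t)_{t≥0}, with X_0 = x_0 ≤ 0 almost surely, |X_{t+1} − X_t| ≤ R almost surely for all t (for some R > 0), and E[X_{t+1} − X_t | F_t] ≤ −δ on the event {X_t ≥ 0} for all t, where δ > 0. Let τ_{x₁}⁺ = inf{t ≥ 0 : X_t ≥ x₁}. Then for every x₁ > R and every integer t₃ ≥ 1, P(τ_{x₁}⁺ ≤ t₃) ≤ t₃² exp(−(x₁ − R) δ²/(8 R³)). -/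
open MeasureTheory

/-!
Put `L = δ / (2 R²)`. On `{X_r ≥ 0}` the drift is at most `-δ`, and `exp y ≤ 1 + y + y²` for
`|y| ≤ 1` gives `E[exp (L (X_{r+1} - X_r)) | F_r] ≤ 1 + L²R² - Lδ ≤ 1` there. Hence, for a fixed
`s`, `exp (L X_r)` restricted to the excursion `{X_s ≤ 0, X ≥ 0 on (s, r]}` has nonincreasing
expectation for `r > s`, starting from at most `exp (L R)` at `r = s + 1`; by Markov's inequality
the excursion reaches `x₁` at time `t` with probability at most `exp (-L (x₁ - R))`. A path
reaching `x₁ > 0` by time `t₃` does so during the excursion started at its last time `≤ 0`, and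
there are at most `t₃²` pairs `s < t ≤ t₃`. If `δ > R`, the drift bound is incompatible with
increments `≥ -R`, so `X` is a.s. negative.
-/

theorem Real.exp_le_one_add_add_sq {x : ℝ} (hx : |x| ≤ 1) : Real.exp x ≤ 1 + x + x ^ 2 := by
  linarith [(abs_le.mp (Real.abs_exp_sub_one_sub_id_le hx)).2]

theorem exists_lt_nonpos_and_nonneg_Ioc {x : ℕ → ℝ} (h0 : x 0 ≤ 0) {u : ℕ} (hu : 0 < x u) :
    ∃ s < u, x s ≤ 0 ∧ ∀ q, s < q → q ≤ u → 0 ≤ x q := by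
  induction u with
  | zero => linarith
  | succ u ih =>
    by_cases hxu : x u ≤ 0
    · exact ⟨u, u.lt_succ_self, hxu, fun q hq hqu => (by omega : q = u + 1) ▸ hu.le⟩
    · obtain ⟨s, hsu, hxs, hpos⟩ := ih (not_le.mp hxu)
      refine ⟨s, by omega, hxs, fun q hsq hqu => ?_⟩
      rcases Nat.lt_or_eq_of_le hqu with hqu | rfl
      · exact hpos q hsq (by omega)
      · exact hu.le

theorem sum_Icc_sum_range_le {f : ℕ → ℕ → ℝ} {c : ℝ} (hc : 0 ≤ c)
    (hf : ∀ s t, s < t → f s t ≤ c) (n : ℕ) :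
    ∑ t ∈ Finset.Icc 1 n, ∑ s ∈ Finset.range t, f s t ≤ (n : ℝ) ^ 2 * c := by
  calc _ ≤ ∑ t ∈ Finset.Icc 1 n, (n : ℝ) * c := by
        refine Finset.sum_le_sum fun t ht => ?_
        refine (Finset.sum_le_card_nsmul _ _ c fun s hs => hf s t (Finset.mem_range.mp hs)).trans ?_
        rw [Finset.card_range, nsmul_eq_mul]
        gcongr
        exact_mod_cast (Finset.mem_Icc.mp ht).2
    _ = (n : ℝ) ^ 2 * c := by
        rw [Finset.sum_const, Nat.card_Icc, add_tsub_cancel_right, nsmul_eq_mul]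
        ring

namespace MeasureTheory

variable {Ω : Type*} {m : MeasurableSpace Ω} {μ : Measure Ω}

theorem integrable_exp_mul_of_ae_le [IsFiniteMeasure μ] {f : Ω → ℝ} {L C : ℝ}
    (hf : AEStronglyMeasurable f μ) (hL : 0 ≤ L) (hfC : ∀ᵐ ω ∂μ, f ω ≤ C) :
    Integrable (fun ω => Real.exp (L * f ω)) μ := by
  refine Integrable.of_bound (Real.continuous_exp.comp_aestronglyMeasurable (hf.const_mul L))
    (Real.exp (L * C)) ?_
  filter_upwards [hfC] with ω hω
  rw [Real.norm_eq_abs, abs_of_pos (Real.exp_pos _)]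
  exact Real.exp_le_exp.mpr (mul_le_mul_of_nonneg_left hω hL)

theorem condExp_exp_mul_le [IsFiniteMeasure μ] {D : Ω → ℝ} {L R : ℝ}
    (hD : AEStronglyMeasurable D μ) (hL : 0 ≤ L) (hLR : L * R ≤ 1) (hDR : ∀ᵐ ω ∂μ, |D ω| ≤ R)
    {m' : MeasurableSpace Ω} (hm : m' ≤ m) :
    ∀ᵐ ω ∂μ, μ[fun ω => Real.exp (L * D ω)|m'] ω ≤ 1 + (L * R) ^ 2 + L * μ[D|m'] ω := by
  have hDi : Integrable D μ := Integrable.of_bound hD R (by simpa only [Real.norm_eq_abs] using hDR)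
  have hexpi := integrable_exp_mul_of_ae_le hD hL (hDR.mono fun ω h => (abs_le.mp h).2)
  have hrhsi := (integrable_const (1 + (L * R) ^ 2)).add (hDi.smul L)
  have hpt : (fun ω => Real.exp (L * D ω)) ≤ᵐ[μ] (fun _ => 1 + (L * R) ^ 2) + L • D := by
    filter_upwards [hDR] with ω hω
    have habs : |L * D ω| ≤ L * R := by
      rw [abs_mul, abs_of_nonneg hL]; exact mul_le_mul_of_nonneg_left hω hL
    have hsq : (L * D ω) ^ 2 ≤ (L * R) ^ 2 := by
      rw [← sq_abs]; exact pow_le_pow_left₀ (abs_nonneg _) habs 2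
    simp only [Pi.add_apply, Pi.smul_apply, smul_eq_mul]
    linarith [Real.exp_le_one_add_add_sq (habs.trans hLR)]
  filter_upwards [condExp_mono (m := m') hexpi hrhsi hpt,
    condExp_add (integrable_const _) (hDi.smul L) m', condExp_smul L D m'] with ω hle hadd hsmul
  rwa [hadd, Pi.add_apply, condExp_const hm, hsmul] at hle

theorem measure_eq_zero_of_condExp_le_of_lt [IsFiniteMeasure μ] {m' : MeasurableSpace Ω}
    (hm : m' ≤ m) {Y : Ω → ℝ} {E : Set Ω} {a b : ℝ} (hY : Integrable Y μ)
    (haY : ∀ᵐ ω ∂μ, a ≤ Y ω) (hE : ∀ᵐ ω ∂μ, ω ∈ E → μ[Y|m'] ω ≤ b) (hba : b < a) :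
    μ E = 0 := by
  have hge : ∀ᵐ ω ∂μ, a ≤ μ[Y|m'] ω := by
    have := condExp_mono (m := m') (integrable_const a) hY haY
    rwa [condExp_const hm] at this
  rw [measure_eq_zero_iff_ae_notMem]
  filter_upwards [hge, hE] with ω hge hE hω
  linarith [hE hω]

theorem integral_mul_le_of_condExp_le_one [IsFiniteMeasure μ] {m' : MeasurableSpace Ω}
    (hm : m' ≤ m) {G Y : Ω → ℝ} (hG : StronglyMeasurable[m'] G) (hG0 : 0 ≤ G)
    (hGi : Integrable G μ) (hYi : Integrable Y μ) (hGYi : Integrable (G * Y) μ)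
    (hY : ∀ᵐ ω ∂μ, G ω ≠ 0 → μ[Y|m'] ω ≤ 1) :
    ∫ ω, (G * Y) ω ∂μ ≤ ∫ ω, G ω ∂μ := by
  rw [← integral_condExp hm]
  refine integral_mono_ae integrable_condExp hGi ?_
  filter_upwards [condExp_mul_of_stronglyMeasurable_left hG hGYi hYi, hY] with ω hmul hY
  rw [hmul, Pi.mul_apply]
  by_cases h : G ω = 0
  · simp [h]
  · exact mul_le_of_le_one_right (hG0 ω) (hY h)

section Excursion

variable {F : Filtration ℕ m} {X : ℕ → Ω → ℝ} {L R : ℝ} {s r : ℕ}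

def nonnegExcursion (X : ℕ → Ω → ℝ) (s r : ℕ) : Set Ω :=
  {ω | X s ω ≤ 0 ∧ ∀ q, s < q → q ≤ r → 0 ≤ X q ω}

theorem nonnegExcursion_succ_subset : nonnegExcursion X s (r + 1) ⊆ nonnegExcursion X s r :=
  fun _ hω => ⟨hω.1, fun q hsq hqr => hω.2 q hsq (hqr.trans r.le_succ)⟩

theorem nonneg_of_mem_nonnegExcursion {ω : Ω} (hsr : s < r) (hω : ω ∈ nonnegExcursion X s r) :
    0 ≤ X r ω :=
  hω.2 r hsr le_rfl

theorem measurableSet_nonnegExcursion (hX : Adapted F X) (hsr : s ≤ r) :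
    MeasurableSet[F r] (nonnegExcursion X s r) := by
  have hXr : ∀ q ≤ r, Measurable[F r] (X q) := fun q hq => (hX q).mono (F.mono hq) le_rfl
  have hset : nonnegExcursion X s r = {ω | X s ω ≤ 0} ∩ ⋂ q ∈ Set.Ioc s r, {ω | 0 ≤ X q ω} := by
    ext ω
    simp [nonnegExcursion, and_imp]
  rw [hset]
  exact (measurableSet_le (hXr s hsr) measurable_const).inter <|
    MeasurableSet.biInter (Set.to_countable _) fun q hq =>
      measurableSet_le measurable_const (hXr q hq.2)

theorem integral_indicator_exp_succ_le [IsFiniteMeasure μ] (hX : Adapted F X)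
    (hint : ∀ r, Integrable (fun ω => Real.exp (L * X r ω)) μ)
    (hintD : Integrable (fun ω => Real.exp (L * (X (r + 1) ω - X r ω))) μ)
    (hexp : ∀ᵐ ω ∂μ, 0 ≤ X r ω →
      μ[fun ω => Real.exp (L * (X (r + 1) ω - X r ω))|F r] ω ≤ 1)
    (hsr : s < r) :
    ∫ ω, (nonnegExcursion X s (r + 1)).indicator (fun ω => Real.exp (L * X (r + 1) ω)) ω ∂μ ≤
      ∫ ω, (nonnegExcursion X s r).indicator (fun ω => Real.exp (L * X r ω)) ω ∂μ := by
  have hA := measurableSet_nonnegExcursion hX hsr.le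
  set G := (nonnegExcursion X s r).indicator fun ω => Real.exp (L * X r ω)
  have hGY : G * (fun ω => Real.exp (L * (X (r + 1) ω - X r ω))) =
      (nonnegExcursion X s r).indicator fun ω => Real.exp (L * X (r + 1) ω) := by
    ext ω
    by_cases hω : ω ∈ nonnegExcursion X s r
    · simp only [G, Pi.mul_apply, Set.indicator_of_mem hω, ← Real.exp_add]
      ring_nf
    · simp [G, hω]
  have hGY_int : Integrable (G * fun ω => Real.exp (L * (X (r + 1) ω - X r ω))) μ :=
    hGY ▸ (hint (r + 1)).indicator (F.le r _ hA)
  calc _ ≤ ∫ ω, (G * fun ω => Real.exp (L * (X (r + 1) ω - X r ω))) ω ∂μ := by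
        refine integral_mono ((hint (r + 1)).indicator (F.le (r + 1) _
          (measurableSet_nonnegExcursion hX (by omega)))) hGY_int fun ω => ?_
        rw [hGY]
        exact Set.indicator_le_indicator_of_subset nonnegExcursion_succ_subset
          (fun _ => (Real.exp_pos _).le) ω
    _ ≤ ∫ ω, G ω ∂μ := by
        refine integral_mul_le_of_condExp_le_one (F.le r)
          (((hX r).const_mul L).exp.indicator hA).stronglyMeasurable
          (Set.indicator_nonneg fun _ _ => (Real.exp_pos _).le)
          ((hint r).indicator (F.le r _ hA)) hintD hGY_int ?_
        filter_upwards [hexp] with ω hω hG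
        exact hω (nonneg_of_mem_nonnegExcursion hsr (Set.mem_of_indicator_ne_zero hG))

theorem integral_indicator_exp_le [IsProbabilityMeasure μ] (hX : Adapted F X) (hL : 0 ≤ L)
    (hint : ∀ r, Integrable (fun ω => Real.exp (L * X r ω)) μ)
    (hintD : ∀ r, Integrable (fun ω => Real.exp (L * (X (r + 1) ω - X r ω))) μ)
    (hexp : ∀ r, ∀ᵐ ω ∂μ, 0 ≤ X r ω →
      μ[fun ω => Real.exp (L * (X (r + 1) ω - X r ω))|F r] ω ≤ 1)
    (hbd : ∀ᵐ ω ∂μ, X (s + 1) ω - X s ω ≤ R) (hsr : s < r) :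
    ∫ ω, (nonnegExcursion X s r).indicator (fun ω => Real.exp (L * X r ω)) ω ∂μ ≤
      Real.exp (L * R) := by
  induction r, hsr using Nat.le_induction with
  | base =>
    calc _ ≤ ∫ _, Real.exp (L * R) ∂μ := by
          refine integral_mono_ae ((hint _).indicator
            (F.le _ _ (measurableSet_nonnegExcursion hX s.le_succ))) (integrable_const _) ?_
          filter_upwards [hbd] with ω hω
          refine Set.indicator_apply_le' (fun hmem => ?_) fun _ => (Real.exp_pos _).le
          exact Real.exp_le_exp.mpr (mul_le_mul_of_nonneg_left (by linarith [hmem.1]) hL)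
      _ = Real.exp (L * R) := by simp
  | succ r hsr ih => exact (integral_indicator_exp_succ_le hX hint (hintD r) (hexp r) hsr).trans ih

theorem measureReal_nonnegExcursion_inter_le [IsProbabilityMeasure μ] (hX : Adapted F X)
    (hL : 0 ≤ L) (hint : ∀ r, Integrable (fun ω => Real.exp (L * X r ω)) μ)
    (hintD : ∀ r, Integrable (fun ω => Real.exp (L * (X (r + 1) ω - X r ω))) μ)
    (hexp : ∀ r, ∀ᵐ ω ∂μ, 0 ≤ X r ω →
      μ[fun ω => Real.exp (L * (X (r + 1) ω - X r ω))|F r] ω ≤ 1)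
    (hbd : ∀ᵐ ω ∂μ, X (s + 1) ω - X s ω ≤ R) (hsr : s < r) (x₁ : ℝ) :
    μ.real (nonnegExcursion X s r ∩ {ω | x₁ ≤ X r ω}) ≤ Real.exp (L * (R - x₁)) := by
  set M := (nonnegExcursion X s r).indicator fun ω => Real.exp (L * X r ω)
  have hmarkov := mul_meas_ge_le_integral_of_nonneg
    (ae_of_all _ (Set.indicator_nonneg fun _ _ => (Real.exp_pos _).le))
    ((hint r).indicator (F.le r _ (measurableSet_nonnegExcursion hX hsr.le))) (Real.exp (L * x₁))
  have hsub : nonnegExcursion X s r ∩ {ω | x₁ ≤ X r ω} ⊆ {ω | Real.exp (L * x₁) ≤ M ω} :=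
    fun ω hω => by
      change _ ≤ M ω
      simp only [M, Set.indicator_of_mem hω.1]
      exact Real.exp_le_exp.mpr (mul_le_mul_of_nonneg_left hω.2 hL)
  calc _ ≤ μ.real {ω | Real.exp (L * x₁) ≤ M ω} := measureReal_mono hsub
    _ ≤ Real.exp (L * R) / Real.exp (L * x₁) := by
        rw [le_div_iff₀ (Real.exp_pos _)]
        linarith [integral_indicator_exp_le hX hL hint hintD hexp hbd hsr]
    _ = Real.exp (L * (R - x₁)) := by rw [← Real.exp_sub, mul_sub]

theorem measureReal_exists_ge_le_sum_nonnegExcursion [IsFiniteMeasure μ]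
    (h0 : ∀ᵐ ω ∂μ, X 0 ω ≤ 0) {x₁ : ℝ} (hx₁ : 0 < x₁) (n : ℕ) :
    μ.real {ω | ∃ u ≤ n, x₁ ≤ X u ω} ≤
      ∑ t ∈ Finset.Icc 1 n, ∑ s ∈ Finset.range t,
        μ.real (nonnegExcursion X s t ∩ {ω | x₁ ≤ X t ω}) := by
  have hcover : {ω | ∃ u ≤ n, x₁ ≤ X u ω} ≤ᵐ[μ]
      (⋃ t ∈ Finset.Icc 1 n, ⋃ s ∈ Finset.range t,
        nonnegExcursion X s t ∩ {ω | x₁ ≤ X t ω} : Set Ω) := by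
    filter_upwards [h0] with ω hω ⟨u, hun, hxu⟩
    obtain ⟨s, hsu, hxs, hpos⟩ :=
      exists_lt_nonpos_and_nonneg_Ioc (x := fun q => X q ω) hω (hx₁.trans_le hxu)
    exact Set.mem_iUnion₂.mpr ⟨u, Finset.mem_Icc.mpr ⟨by omega, hun⟩,
      Set.mem_iUnion₂.mpr ⟨s, Finset.mem_range.mpr hsu, ⟨hxs, hpos⟩, hxu⟩⟩
  calc _ ≤ μ.real (⋃ t ∈ Finset.Icc 1 n, ⋃ s ∈ Finset.range t,
        nonnegExcursion X s t ∩ {ω | x₁ ≤ X t ω}) :=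
        ENNReal.toReal_mono (measure_ne_top _ _) (measure_mono_ae hcover)
    _ ≤ _ := (measureReal_biUnion_finset_le _ _).trans
        (Finset.sum_le_sum fun t _ => measureReal_biUnion_finset_le _ _)

end Excursion

section Drift

variable {F : Filtration ℕ m} {X : ℕ → Ω → ℝ} {R δ : ℝ}

theorem ae_le_add_mul_of_increment_le {x₀ : ℝ} (h0 : ∀ᵐ ω ∂μ, X 0 ω ≤ x₀)
    (hbd : ∀ t, ∀ᵐ ω ∂μ, X (t + 1) ω - X t ω ≤ R) (r : ℕ) :
    ∀ᵐ ω ∂μ, X r ω ≤ x₀ + r * R := by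
  induction r with
  | zero => simpa using h0
  | succ r ih =>
    filter_upwards [ih, hbd r] with ω hr hinc
    push_cast
    linarith

theorem measure_setOf_nonneg_eq_zero_of_lt_drift [IsFiniteMeasure μ] (hX : Adapted F X)
    (hbd : ∀ t, ∀ᵐ ω ∂μ, |X (t + 1) ω - X t ω| ≤ R)
    (hdrift : ∀ t, ∀ᵐ ω ∂μ, 0 ≤ X t ω → μ[X (t + 1) - X t|F t] ω ≤ -δ) (hRδ : R < δ) (t : ℕ) :
    μ {ω | 0 ≤ X t ω} = 0 := by
  have hD : Measurable (X (t + 1) - X t) :=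
    ((hX (t + 1)).mono (F.le _) le_rfl).sub ((hX t).mono (F.le _) le_rfl)
  exact measure_eq_zero_of_condExp_le_of_lt (F.le t)
    (Integrable.of_bound hD.aestronglyMeasurable R (hbd t))
    ((hbd t).mono fun ω h => (abs_le.mp h).1) (hdrift t) (neg_lt_neg hRδ)

theorem measureReal_nonnegExcursion_inter_le_of_drift [IsProbabilityMeasure μ]
    (hX : Adapted F X) (hR : 0 < R) (hδ : 0 < δ) (hδR : δ ≤ R)
    (h0 : ∀ᵐ ω ∂μ, X 0 ω ≤ 0) (hbd : ∀ t, ∀ᵐ ω ∂μ, |X (t + 1) ω - X t ω| ≤ R)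
    (hdrift : ∀ t, ∀ᵐ ω ∂μ, 0 ≤ X t ω → μ[X (t + 1) - X t|F t] ω ≤ -δ)
    {s t : ℕ} (hst : s < t) (x₁ : ℝ) :
    μ.real (nonnegExcursion X s t ∩ {ω | x₁ ≤ X t ω}) ≤
      Real.exp (δ / (2 * R ^ 2) * (R - x₁)) := by
  set L := δ / (2 * R ^ 2)
  have hL : 0 ≤ L := by positivity
  have hLR : L * R ≤ 1 := by
    rw [div_mul_eq_mul_div, div_le_one (by positivity)]
    nlinarith
  have hLR2 : L * R ^ 2 = δ / 2 := by simp only [L]; field_simp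
  have hmeas : ∀ r, Measurable (X r) := fun r => (hX r).mono (F.le r) le_rfl
  have hinc : ∀ t, ∀ᵐ ω ∂μ, X (t + 1) ω - X t ω ≤ R :=
    fun t => (hbd t).mono fun ω h => (abs_le.mp h).2
  have hintD : ∀ r, Integrable (fun ω => Real.exp (L * (X (r + 1) ω - X r ω))) μ := fun r =>
    integrable_exp_mul_of_ae_le ((hmeas (r + 1)).sub (hmeas r)).aestronglyMeasurable hL (hinc r)
  have hint : ∀ r, Integrable (fun ω => Real.exp (L * X r ω)) μ := fun r =>
    integrable_exp_mul_of_ae_le (hmeas r).aestronglyMeasurable hL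
      (ae_le_add_mul_of_increment_le h0 hinc r)
  have hexp : ∀ r, ∀ᵐ ω ∂μ, 0 ≤ X r ω →
      μ[fun ω => Real.exp (L * (X (r + 1) ω - X r ω))|F r] ω ≤ 1 := fun r => by
    filter_upwards [condExp_exp_mul_le ((hmeas (r + 1)).sub (hmeas r)).aestronglyMeasurable
      hL hLR (hbd r) (F.le r), hdrift r] with ω hmgf hdr hω
    calc _ ≤ 1 + (L * R) ^ 2 + L * μ[X (r + 1) - X r|F r] ω := hmgf
      _ ≤ 1 + (L * R) ^ 2 + L * -δ := by gcongr; exact hdr hω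
      _ ≤ 1 := by nlinarith
  exact measureReal_nonnegExcursion_inter_le hX hL hint hintD hexp (hinc s) hst x₁

end Drift

end MeasureTheory

theorem supermartingale_no_upcrossing_drift_general
    {Ω : Type*} {m : MeasurableSpace Ω} {μ : Measure Ω} [IsProbabilityMeasure μ]
    (F : Filtration ℕ m) (X : ℕ → Ω → ℝ) (hadapt : Adapted F X)
    (x₀ R δ : ℝ) (hR : 0 < R) (hδ : 0 < δ) (hx₀ : x₀ ≤ 0)
    (h0 : ∀ᵐ ω ∂μ, X 0 ω = x₀)
    (hbd : ∀ t : ℕ, ∀ᵐ ω ∂μ, |X (t + 1) ω - X t ω| ≤ R)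
    (hdrift : ∀ t : ℕ, ∀ᵐ ω ∂μ, 0 ≤ X t ω → (μ[X (t + 1) - X t|F t]) ω ≤ -δ)
    (x₁ : ℝ) (hx₁ : R < x₁) (t₃ : ℕ) :
    (μ {ω | ∃ s ≤ t₃, x₁ ≤ X s ω}).toReal ≤
      (t₃ : ℝ) ^ 2 * Real.exp (-((x₁ - R) * δ ^ 2) / (8 * R ^ 3)) := by
  rcases le_or_gt δ R with hδR | hRδ
  · have h0' : ∀ᵐ ω ∂μ, X 0 ω ≤ 0 := h0.mono fun ω h => h ▸ hx₀
    calc _ ≤ _ := measureReal_exists_ge_le_sum_nonnegExcursion h0' (hR.trans hx₁) t₃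
      _ ≤ (t₃ : ℝ) ^ 2 * Real.exp (δ / (2 * R ^ 2) * (R - x₁)) :=
          sum_Icc_sum_range_le (Real.exp_pos _).le (fun s t hst =>
            measureReal_nonnegExcursion_inter_le_of_drift hadapt hR hδ hδR h0' hbd hdrift hst x₁) t₃
      _ ≤ _ := by
          gcongr
          rw [div_mul_eq_mul_div, div_le_div_iff₀ (by positivity) (by positivity)]
          nlinarith [mul_nonneg (mul_nonneg (mul_nonneg (sub_nonneg.mpr hx₁.le) hδ.le)
            (by linarith : (0 : ℝ) ≤ 4 * R - δ)) (sq_nonneg R)]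
  · have hnull : μ {ω | ∃ s ≤ t₃, x₁ ≤ X s ω} = 0 := by
      refine measure_mono_null (fun ω ⟨s, _, hs⟩ => Set.mem_iUnion.mpr ⟨s, ?_⟩)
        (measure_iUnion_null (measure_setOf_nonneg_eq_zero_of_lt_drift hadapt hbd hdrift hRδ))
      exact (hR.trans hx₁).le.trans hs
    rw [hnull, ENNReal.toReal_zero]
    positivity

/-- **Hitting-time estimate** (Lemma 2.1, part 3). If `(X_t)` is adapted,
starts at `x₀ ≤ 0`, has increments bounded by `R`, and has conditional drift at
most `−δ < 0` on the event `{X_t ≥ 0}`, then for every `x₁ > R` and every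
integer `t₃ ≥ 1`, `P(τ_{x₁}⁺ ≤ t₃) ≤ t₃² exp(−(x₁ − R) δ²/(8 R³))`. -/
theorem supermartingale_no_upcrossing_drift
    {Ω : Type*} {m : MeasurableSpace Ω} {μ : Measure Ω} [IsProbabilityMeasure μ]
    (F : Filtration ℕ m) (X : ℕ → Ω → ℝ) (hadapt : Adapted F X)
    (x₀ R δ : ℝ) (hR : 0 < R) (hδ : 0 < δ) (hx₀ : x₀ ≤ 0)
    (h0 : ∀ᵐ ω ∂μ, X 0 ω = x₀)
    (hbd : ∀ t : ℕ, ∀ᵐ ω ∂μ, |X (t + 1) ω - X t ω| ≤ R)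
    (hdrift : ∀ t : ℕ, ∀ᵐ ω ∂μ, 0 ≤ X t ω → (μ[X (t + 1) - X t|F t]) ω ≤ -δ)
    (x₁ : ℝ) (hx₁ : R < x₁) (t₃ : ℕ) (ht₃ : 1 ≤ t₃) :
    (μ {ω | ∃ s ≤ t₃, x₁ ≤ X s ω}).toReal ≤
      (t₃ : ℝ) ^ 2 * Real.exp (-((x₁ - R) * δ ^ 2) / (8 * R ^ 3)) :=
  supermartingale_no_upcrossing_drift_general F X hadapt x₀ R δ hR hδ hx₀ h0 hbd hdrift x₁ hx₁ t₃
end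

section
/- Let (Z_t)_{t≥0} be a time-homogeneous Markov chain taking values in a bounded measurable subset of ℝ^d, with transition kernel P, and write E_{z₀}, Var_{z₀} for expectation and variance when Z_0 = z₀. Suppose there is 0 < η < 1 such that for all pairs of starting states (z₀, z̃₀) and all t ≥ 0, ‖E_{z₀} Z_t − E_{z̃₀} Z_t‖₂ ≤ η^t ‖z₀ − z̃₀‖₂. Then v_t := sup_{z₀} E_{z₀} ‖Z_t − E_{z₀} Z_t‖₂² satisfies v_t ≤ v₁ · min{t, (1−η²)^{−1}} for all t ≥ 1. -/
/-!
By the law of total variance over the first step, `Var_{z₀}(Z_{t+1})` is the mean of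
`Var_{Z₁}(Z_t)`, at most `v_t`, plus the variance of `E_{Z₁} Z_t`. As `z ↦ E_z Z_t` is
`η^t`-Lipschitz on `S`, the latter is at most `η^{2t} Var_{z₀}(Z₁) ≤ η^{2t} v₁`. Hence
`v_{t+1} ≤ v_t + η^{2t} v₁`, and summing, `v_t ≤ v₁ ∑_{s<t} η^{2s} ≤ v₁ min {t, (1 - η²)⁻¹}`.
-/

open MeasureTheory ProbabilityTheory

/-- The `t`-step transition kernel of a time-homogeneous Markov chain with
one-step kernel `κ`. -/
noncomputable def kernelIter {E : Type*} [MeasurableSpace E] (κ : Kernel E E) :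
    ℕ → Kernel E E
  | 0 => Kernel.id
  | (t + 1) => κ ∘ₖ kernelIter κ t

/-- `E_{z₀} Z_t`: the mean position of the chain at time `t` started from `z₀`. -/
noncomputable def chainMean {d : ℕ} (κ : Kernel (EuclideanSpace ℝ (Fin d)) (EuclideanSpace ℝ (Fin d)))
    (t : ℕ) (z₀ : EuclideanSpace ℝ (Fin d)) : EuclideanSpace ℝ (Fin d) :=
  ∫ z, z ∂(kernelIter κ t z₀)

/-- `Var_{z₀}(Z_t) = E_{z₀} ‖Z_t − E_{z₀} Z_t‖₂²`. -/
noncomputable def chainVar {d : ℕ} (κ : Kernel (EuclideanSpace ℝ (Fin d)) (EuclideanSpace ℝ (Fin d)))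
    (t : ℕ) (z₀ : EuclideanSpace ℝ (Fin d)) : ℝ :=
  ∫ z, ‖z - chainMean κ t z₀‖ ^ 2 ∂(kernelIter κ t z₀)

/-- `v_t = sup_{z₀ ∈ S} Var_{z₀}(Z_t)`. -/
noncomputable def chainVarSup {d : ℕ} (κ : Kernel (EuclideanSpace ℝ (Fin d)) (EuclideanSpace ℝ (Fin d)))
    (S : Set (EuclideanSpace ℝ (Fin d))) (t : ℕ) : ℝ :=
  ⨆ z₀ : S, chainVar κ t z₀

section Variance

variable {Ω E F : Type*} [MeasurableSpace Ω] {μ : Measure Ω} [IsProbabilityMeasure μ]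
  [NormedAddCommGroup E] [NormedAddCommGroup F]

lemma integrable_norm_sub_sq {X : Ω → E} (hX : MemLp X 2 μ) (c : E) :
    Integrable (fun ω ↦ ‖X ω - c‖ ^ 2) μ :=
  (memLp_two_iff_integrable_sq_norm (hX.1.sub aestronglyMeasurable_const)).1
    (hX.sub (memLp_const c))

variable [InnerProductSpace ℝ E] [CompleteSpace E] [InnerProductSpace ℝ F] [CompleteSpace F]

lemma integral_norm_sub_sq_eq {X : Ω → E} (hX : MemLp X 2 μ) (c : E) :
    ∫ ω, ‖X ω - c‖ ^ 2 ∂μ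
      = ∫ ω, ‖X ω - ∫ ω', X ω' ∂μ‖ ^ 2 ∂μ + ‖∫ ω', X ω' ∂μ - c‖ ^ 2 := by
  set m := ∫ ω', X ω' ∂μ
  have hXint : Integrable X μ := hX.integrable one_le_two
  have hcentred : Integrable (fun ω ↦ X ω - m) μ := hXint.sub (integrable_const m)
  have hcross : ∫ ω, inner ℝ (m - c) (X ω - m) ∂μ = 0 := by
    rw [integral_inner hcentred, integral_sub hXint (integrable_const m)]
    simp [m]
  have hsplit : ∀ ω, ‖X ω - c‖ ^ 2
      = ‖X ω - m‖ ^ 2 + (2 * inner ℝ (m - c) (X ω - m) + ‖m - c‖ ^ 2) := fun ω ↦ by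
    rw [show X ω - c = (X ω - m) + (m - c) by abel, norm_add_sq_real, real_inner_comm]
    ring
  have hcross_int : Integrable (fun ω ↦ 2 * inner ℝ (m - c) (X ω - m)) μ :=
    (hcentred.const_inner (m - c)).const_mul 2
  have hrest : Integrable (fun ω ↦ 2 * inner ℝ (m - c) (X ω - m) + ‖m - c‖ ^ 2) μ :=
    hcross_int.add (integrable_const _)
  simp_rw [hsplit]
  rw [integral_add (integrable_norm_sub_sq hX m) hrest,
    integral_add hcross_int (integrable_const _), integral_const_mul, hcross]
  simp

lemma integral_norm_sub_integral_sq_le {X : Ω → E} (hX : AEStronglyMeasurable X μ) {R : ℝ}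
    (hR : ∀ᵐ ω ∂μ, ‖X ω‖ ≤ R) :
    ∫ ω, ‖X ω - ∫ ω', X ω' ∂μ‖ ^ 2 ∂μ ≤ R ^ 2 := by
  have hX2 : MemLp X 2 μ := .of_bound hX R hR
  have hsecond := integral_norm_sub_sq_eq hX2 0
  simp only [sub_zero] at hsecond
  have hmoment : ∫ ω, ‖X ω‖ ^ 2 ∂μ ≤ R ^ 2 := by
    calc ∫ ω, ‖X ω‖ ^ 2 ∂μ ≤ ∫ _, R ^ 2 ∂μ :=
          integral_mono_ae (by simpa using integrable_norm_sub_sq hX2 0) (integrable_const _)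
            (hR.mono fun ω hω ↦ pow_le_pow_left₀ (norm_nonneg _) hω 2)
      _ = R ^ 2 := by simp
  linarith [sq_nonneg ‖∫ ω', X ω' ∂μ‖]

/-- Averaging `‖g (X ω) - g (X ω')‖² ≤ L² ‖X ω - X ω'‖²` over independent `ω`, `ω'` gives twice
each variance. -/
lemma integral_norm_sub_integral_sq_comp_le {X : Ω → E} {g : E → F} {S : Set E} {L : ℝ}
    (hX : MemLp X 2 μ) (hgX : MemLp (fun ω ↦ g (X ω)) 2 μ) (hXS : ∀ᵐ ω ∂μ, X ω ∈ S)
    (hg : ∀ x ∈ S, ∀ y ∈ S, ‖g x - g y‖ ≤ L * ‖x - y‖) :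
    ∫ ω, ‖g (X ω) - ∫ ω', g (X ω') ∂μ‖ ^ 2 ∂μ
      ≤ L ^ 2 * ∫ ω, ‖X ω - ∫ ω', X ω' ∂μ‖ ^ 2 ∂μ := by
  set Vg := ∫ ω, ‖g (X ω) - ∫ ω', g (X ω') ∂μ‖ ^ 2 ∂μ
  set V := ∫ ω, ‖X ω - ∫ ω', X ω' ∂μ‖ ^ 2 ∂μ
  have hpair : ∀ᵐ ω' ∂μ, Vg + ‖g (X ω') - ∫ ω, g (X ω) ∂μ‖ ^ 2
      ≤ L ^ 2 * (V + ‖X ω' - ∫ ω, X ω ∂μ‖ ^ 2) := by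
    filter_upwards [hXS] with ω' hω'
    rw [norm_sub_rev, norm_sub_rev (X ω'), ← integral_norm_sub_sq_eq hgX,
      ← integral_norm_sub_sq_eq hX, ← integral_const_mul]
    refine integral_mono_ae (integrable_norm_sub_sq hgX _)
      ((integrable_norm_sub_sq hX _).const_mul _) ?_
    filter_upwards [hXS] with ω hω
    calc ‖g (X ω) - g (X ω')‖ ^ 2 ≤ (L * ‖X ω - X ω'‖) ^ 2 :=
          pow_le_pow_left₀ (norm_nonneg _) (hg _ hω _ hω') 2
      _ = L ^ 2 * ‖X ω - X ω'‖ ^ 2 := mul_pow _ _ _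
  have hint : ∫ ω', (Vg + ‖g (X ω') - ∫ ω, g (X ω) ∂μ‖ ^ 2) ∂μ
      ≤ ∫ ω', L ^ 2 * (V + ‖X ω' - ∫ ω, X ω ∂μ‖ ^ 2) ∂μ :=
    integral_mono_ae ((integrable_const Vg).add (integrable_norm_sub_sq hgX _))
      (((integrable_const V).add (integrable_norm_sub_sq hX _)).const_mul _) hpair
  rw [integral_add (integrable_const _) (integrable_norm_sub_sq hgX _),
    integral_const_mul, integral_add (integrable_const _) (integrable_norm_sub_sq hX _)] at hint
  simp only [integral_const, probReal_univ, one_smul] at hint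
  linarith

end Variance

section TotalVariance

variable {α β E : Type*} [MeasurableSpace α] [MeasurableSpace β]
  [NormedAddCommGroup E] [MeasurableSpace E] [BorelSpace E]
  {κ : Kernel α β} {η : Kernel β E} {a : α} {ν : Measure β} {R : ℝ}

lemma ae_norm_le_comp (hR : ∀ᵐ b ∂κ a, ∀ᵐ x ∂η b, ‖x‖ ≤ R) : ∀ᵐ x ∂(η ∘ₖ κ) a, ‖x‖ ≤ R :=
  Kernel.ae_comp_of_ae_ae (measurableSet_le measurable_norm measurable_const) hR

variable [InnerProductSpace ℝ E] [SecondCountableTopology E]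

lemma stronglyMeasurable_integral_id_kernel [IsSFiniteKernel η] :
    StronglyMeasurable fun b ↦ ∫ x, x ∂η b :=
  measurable_snd.stronglyMeasurable.integral_kernel_prod_right'

variable [IsMarkovKernel η] [IsProbabilityMeasure ν]

lemma memLp_integral_id_kernel (hR : ∀ᵐ b ∂ν, ∀ᵐ x ∂η b, ‖x‖ ≤ R) :
    MemLp (fun b ↦ ∫ x, x ∂η b) 2 ν :=
  .of_bound stronglyMeasurable_integral_id_kernel.aestronglyMeasurable R
    (hR.mono fun _ hb ↦ by simpa using norm_integral_le_of_norm_le_const hb)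

lemma integral_id_comp [IsMarkovKernel κ] (hR : ∀ᵐ b ∂κ a, ∀ᵐ x ∂η b, ‖x‖ ≤ R) :
    ∫ x, x ∂(η ∘ₖ κ) a = ∫ b, ∫ x, x ∂η b ∂κ a :=
  Kernel.integral_comp (.of_bound aestronglyMeasurable_id R (ae_norm_le_comp hR))

variable [CompleteSpace E]

lemma integrable_integral_norm_sub_integral_sq_kernel (hR : ∀ᵐ b ∂ν, ∀ᵐ x ∂η b, ‖x‖ ≤ R) :
    Integrable (fun b ↦ ∫ x, ‖x - ∫ y, y ∂η b‖ ^ 2 ∂η b) ν := by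
  have hmeas : StronglyMeasurable fun p : β × E ↦ ‖p.2 - ∫ y, y ∂η p.1‖ ^ 2 :=
    ((measurable_snd.sub (stronglyMeasurable_integral_id_kernel.measurable.comp
      measurable_fst)).norm.pow_const 2).stronglyMeasurable
  refine .of_bound hmeas.integral_kernel_prod_right'.aestronglyMeasurable (R ^ 2)
    (hR.mono fun b hb ↦ ?_)
  rw [Real.norm_of_nonneg (integral_nonneg fun _ ↦ by positivity)]
  exact integral_norm_sub_integral_sq_le aestronglyMeasurable_id hb

/-- The law of total variance, about an arbitrary centre `c`. -/
lemma integral_norm_sub_sq_comp [IsMarkovKernel κ] (hR : ∀ᵐ b ∂κ a, ∀ᵐ x ∂η b, ‖x‖ ≤ R)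
    (c : E) :
    ∫ x, ‖x - c‖ ^ 2 ∂(η ∘ₖ κ) a
      = ∫ b, ∫ x, ‖x - ∫ y, y ∂η b‖ ^ 2 ∂η b ∂κ a + ∫ b, ‖∫ y, y ∂η b - c‖ ^ 2 ∂κ a := by
  rw [Kernel.integral_comp (integrable_norm_sub_sq (X := fun x ↦ x)
      (.of_bound aestronglyMeasurable_id R (ae_norm_le_comp hR)) c),
    ← integral_add (integrable_integral_norm_sub_integral_sq_kernel hR)
      (integrable_norm_sub_sq (memLp_integral_id_kernel hR) c)]
  exact integral_congr_ae (hR.mono fun b hb ↦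
    integral_norm_sub_sq_eq (X := fun x ↦ x) (.of_bound aestronglyMeasurable_id R hb) c)

end TotalVariance

section KernelIter

variable {E : Type*} [MeasurableSpace E] {κ : Kernel E E}

instance [IsMarkovKernel κ] (t : ℕ) : IsMarkovKernel (kernelIter κ t) := by
  induction t with
  | zero => rw [kernelIter]; infer_instance
  | succ t ih => rw [kernelIter]; infer_instance

lemma kernelIter_one : kernelIter κ 1 = κ :=
  Kernel.comp_id κ

lemma kernelIter_succ' (t : ℕ) : kernelIter κ (t + 1) = kernelIter κ t ∘ₖ κ := by
  induction t with
  | zero => exact (Kernel.comp_id κ).trans (Kernel.id_comp κ).symm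
  | succ t ih =>
    show κ ∘ₖ kernelIter κ (t + 1) = (κ ∘ₖ kernelIter κ t) ∘ₖ κ
    rw [ih, Kernel.comp_assoc]

lemma ae_mem_kernelIter {S : Set E} (hS : MeasurableSet S) (hstay : ∀ z ∈ S, ∀ᵐ w ∂κ z, w ∈ S)
    (t : ℕ) {z : E} (hz : z ∈ S) : ∀ᵐ w ∂kernelIter κ t z, w ∈ S := by
  induction t with
  | zero =>
    rw [kernelIter, Kernel.id_apply]
    exact (ae_dirac_iff hS).2 hz
  | succ t ih => exact Kernel.ae_comp_of_ae_ae hS (ih.mono hstay)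

end KernelIter

section ChainVariance

variable {d : ℕ} {κ : Kernel (EuclideanSpace ℝ (Fin d)) (EuclideanSpace ℝ (Fin d))}
  {S : Set (EuclideanSpace ℝ (Fin d))} {R : ℝ} {t : ℕ}

lemma chainVarSup_nonneg (t : ℕ) : 0 ≤ chainVarSup κ S t :=
  Real.iSup_nonneg fun _ ↦ integral_nonneg fun _ ↦ by positivity

variable [IsMarkovKernel κ]

lemma chainVar_le_chainVarSup (hS : MeasurableSet S) (hstay : ∀ z ∈ S, ∀ᵐ w ∂κ z, w ∈ S)
    (hR : ∀ z ∈ S, ‖z‖ ≤ R) {z : EuclideanSpace ℝ (Fin d)} (hz : z ∈ S) :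
    chainVar κ t z ≤ chainVarSup κ S t := by
  refine le_ciSup (f := fun w : S ↦ chainVar κ t w) ⟨R ^ 2, ?_⟩ ⟨z, hz⟩
  rintro _ ⟨w, rfl⟩
  exact integral_norm_sub_integral_sq_le aestronglyMeasurable_id
    ((ae_mem_kernelIter hS hstay t w.2).mono hR)

lemma chainVar_succ_le (hS : MeasurableSet S) (hstay : ∀ z ∈ S, ∀ᵐ w ∂κ z, w ∈ S)
    (hR : ∀ z ∈ S, ‖z‖ ≤ R) {L : ℝ}
    (hcontr : ∀ z₀ ∈ S, ∀ z₁ ∈ S, ‖chainMean κ t z₀ - chainMean κ t z₁‖ ≤ L * ‖z₀ - z₁‖)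
    {z₀ : EuclideanSpace ℝ (Fin d)} (hz₀ : z₀ ∈ S) :
    chainVar κ (t + 1) z₀ ≤ chainVarSup κ S t + L ^ 2 * chainVarSup κ S 1 := by
  have hS₁ : ∀ᵐ z ∂κ z₀, z ∈ S := hstay z₀ hz₀
  have hR_t : ∀ᵐ z ∂κ z₀, ∀ᵐ w ∂kernelIter κ t z, ‖w‖ ≤ R :=
    hS₁.mono fun z hz ↦ (ae_mem_kernelIter hS hstay t hz).mono hR
  have hdecomp : chainVar κ (t + 1) z₀ = ∫ z, chainVar κ t z ∂κ z₀
      + ∫ z, ‖chainMean κ t z - ∫ z', chainMean κ t z' ∂κ z₀‖ ^ 2 ∂κ z₀ := by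
    rw [chainVar, chainMean, kernelIter_succ', integral_id_comp hR_t]
    exact integral_norm_sub_sq_comp hR_t _
  have hinner : ∫ z, chainVar κ t z ∂κ z₀ ≤ chainVarSup κ S t := by
    calc ∫ z, chainVar κ t z ∂κ z₀ ≤ ∫ _, chainVarSup κ S t ∂κ z₀ :=
          integral_mono_ae (integrable_integral_norm_sub_integral_sq_kernel hR_t)
            (integrable_const _) (hS₁.mono fun z hz ↦ chainVar_le_chainVarSup hS hstay hR hz)
      _ = chainVarSup κ S t := by simp
  have hmeans : ∫ z, ‖chainMean κ t z - ∫ z', chainMean κ t z' ∂κ z₀‖ ^ 2 ∂κ z₀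
      ≤ L ^ 2 * chainVar κ 1 z₀ := by
    rw [chainVar, chainMean, kernelIter_one]
    exact integral_norm_sub_integral_sq_comp_le (X := fun z ↦ z)
      (.of_bound aestronglyMeasurable_id R (hS₁.mono hR)) (memLp_integral_id_kernel hR_t) hS₁
      hcontr
  calc chainVar κ (t + 1) z₀
      ≤ chainVarSup κ S t + L ^ 2 * chainVar κ 1 z₀ := by rw [hdecomp]; gcongr
    _ ≤ chainVarSup κ S t + L ^ 2 * chainVarSup κ S 1 := by
      gcongr; exact chainVar_le_chainVarSup hS hstay hR hz₀

lemma chainVarSup_succ_le (hS : MeasurableSet S) (hstay : ∀ z ∈ S, ∀ᵐ w ∂κ z, w ∈ S)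
    (hR : ∀ z ∈ S, ‖z‖ ≤ R) {L : ℝ}
    (hcontr : ∀ z₀ ∈ S, ∀ z₁ ∈ S, ‖chainMean κ t z₀ - chainMean κ t z₁‖ ≤ L * ‖z₀ - z₁‖) :
    chainVarSup κ S (t + 1) ≤ chainVarSup κ S t + L ^ 2 * chainVarSup κ S 1 :=
  Real.iSup_le (fun z ↦ chainVar_succ_le hS hstay hR hcontr z.2)
    (add_nonneg (chainVarSup_nonneg t) (mul_nonneg (sq_nonneg L) (chainVarSup_nonneg 1)))

end ChainVariance

lemma le_mul_geom_sum_of_succ_le {u : ℕ → ℝ} {q : ℝ} (h : ∀ t, u (t + 1) ≤ u t + q ^ t * u 1)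
    (t : ℕ) : u (t + 1) ≤ u 1 * ∑ s ∈ Finset.range (t + 1), q ^ s := by
  induction t with
  | zero => simp
  | succ t ih =>
    rw [Finset.sum_range_succ, mul_add]
    linarith [h (t + 1)]

lemma geom_sum_le_min {q : ℝ} (hq₀ : 0 ≤ q) (hq₁ : q < 1) (n : ℕ) :
    ∑ s ∈ Finset.range n, q ^ s ≤ min (n : ℝ) (1 - q)⁻¹ := by
  refine le_min ?_ ?_
  · simpa using Finset.sum_le_card_nsmul (Finset.range n) (q ^ ·) 1 fun s _ ↦ pow_le_one₀ hq₀ hq₁.le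
  · simpa using geom_sum_Ico_le_of_lt_one (m := 0) (n := n) hq₀ hq₁

/-- **Variance lemma** (Lemma 2.4). Let `(Z_t)` be a Markov chain with values in
a bounded measurable set `S ⊆ ℝ^d` (i.e. the kernel never leaves `S`), whose
expected positions contract: `‖E_{z₀} Z_t − E_{z̃₀} Z_t‖₂ ≤ η^t ‖z₀ − z̃₀‖₂` for
some `0 < η < 1`. Then `v_t ≤ v₁ · min {t, (1−η²)⁻¹}` for all `t ≥ 1`. -/
theorem variance_bound_from_contraction {d : ℕ}
    (κ : Kernel (EuclideanSpace ℝ (Fin d)) (EuclideanSpace ℝ (Fin d)))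
    [IsMarkovKernel κ]
    (S : Set (EuclideanSpace ℝ (Fin d))) (hSmeas : MeasurableSet S)
    (hSbdd : Bornology.IsBounded S)
    (hstay : ∀ z ∈ S, κ z Sᶜ = 0)
    (η : ℝ) (hη0 : 0 < η) (hη1 : η < 1)
    (hcontr : ∀ z₀ ∈ S, ∀ z₁ ∈ S, ∀ t : ℕ,
      ‖chainMean κ t z₀ - chainMean κ t z₁‖ ≤ η ^ t * ‖z₀ - z₁‖) :
    ∀ t : ℕ, 1 ≤ t →
      chainVarSup κ S t ≤ chainVarSup κ S 1 * min (t : ℝ) ((1 - η ^ 2)⁻¹) := by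
  obtain ⟨R, hR⟩ := isBounded_iff_forall_norm_le.1 hSbdd
  have hstep (t : ℕ) :
      chainVarSup κ S (t + 1) ≤ chainVarSup κ S t + (η ^ 2) ^ t * chainVarSup κ S 1 := by
    rw [← pow_mul, mul_comm 2, pow_mul]
    exact chainVarSup_succ_le hSmeas (fun z hz ↦ ae_iff.2 (hstay z hz)) hR
      fun z₀ hz₀ z₁ hz₁ ↦ hcontr z₀ hz₀ z₁ hz₁ t
  rintro t ht
  obtain ⟨s, rfl⟩ := Nat.exists_eq_add_of_le' ht
  calc chainVarSup κ S (s + 1)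
      ≤ chainVarSup κ S 1 * ∑ i ∈ Finset.range (s + 1), (η ^ 2) ^ i :=
        le_mul_geom_sum_of_succ_le hstep s
    _ ≤ chainVarSup κ S 1 * min ((s + 1 : ℕ) : ℝ) (1 - η ^ 2)⁻¹ :=
        mul_le_mul_of_nonneg_left (geom_sum_le_min (sq_nonneg η)
          (pow_lt_one₀ hη0.le hη1 two_ne_zero) _) (chainVarSup_nonneg 1)
end
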